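/- arXiv:2210.08456 — 4 statements merged into one kernel-verified Lean document; each statement's English description precedes it below -/
import Mathlib

section
/- Let Ω ⊂ ℂ be a bounded domain and φ a smooth real-valued function on Ω. If for every (a,r) ∈ Ω_δ one has (1/m)·log L_{mφ}(a,r) → 0 as m → ∞, then φ is subharmonic on Ω, i.e. ∂²φ/∂z∂z̄ ≥ 0 on Ω. -/
set_option maxHeartbeats 1000000

open MeasureTheory Metric Complex
open scoped ContDiff

/-- `δ(a) = sup {r > 0 : Δ(a;r) ⊆ Ω}`, as an extended real number. -/
noncomputable def delta (Ω : Set ℂ) (a : ℂ) : EReal :=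
  sSup {x : EReal | ∃ r : ℝ, x = (r : EReal) ∧ 0 < r ∧ ball a r ⊆ Ω}

/-- The `L²`-extension index `L_φ(a,r)`. -/
noncomputable def Lindex (φ : ℂ → ℝ) (a : ℂ) (r : ℝ) : ℝ :=
  sInf { t : ℝ | ∃ f : ℂ → ℂ, DifferentiableOn ℂ f (ball a r) ∧
    IntegrableOn (fun z => ‖f z‖ ^ 2 * Real.exp (-φ z)) (ball a r) volume ∧
    f a = 1 ∧
    t = (∫ z in ball a r, ‖f z‖ ^ 2 * Real.exp (-φ z)) /
        (Real.pi * r ^ 2 * Real.exp (-φ a)) }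

/-- `∂²φ/∂z∂z̄ (a) = (1/4)(φ_xx + φ_yy)(a)` for a real-valued `φ` on `ℂ`. -/
noncomputable def dzdzbar (φ : ℂ → ℝ) (a : ℂ) : ℝ :=
  (1 / 4) * (fderiv ℝ (fun z => fderiv ℝ φ z 1) a 1 +
             fderiv ℝ (fun z => fderiv ℝ φ z Complex.I) a Complex.I)

section Aux
open Set
open scoped Real ENNReal

-- lintegral polar coordinates, real version
theorem lintegral_comp_polarCoord_symm' (f : ℝ × ℝ → ENNReal) :
    (∫⁻ p in polarCoord.target, (ENNReal.ofReal p.1) * f (polarCoord.symm p)) = ∫⁻ p, f p := by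
  set B : ℝ × ℝ → ℝ × ℝ →L[ℝ] ℝ × ℝ := fun p =>
    LinearMap.toContinuousLinearMap (Matrix.toLin (Module.Basis.finTwoProd ℝ) (Module.Basis.finTwoProd ℝ)
      !![Real.cos p.2, -p.1 * Real.sin p.2; Real.sin p.2, p.1 * Real.cos p.2])
  have A : ∀ p ∈ polarCoord.target, HasFDerivWithinAt polarCoord.symm (B p) polarCoord.target p :=
    fun p _ => (hasFDerivAt_polarCoord_symm p).hasFDerivWithinAt
  have B_det : ∀ p, (B p).det = p.1 := by
    intro p
    conv_rhs => rw [← one_mul p.1, ← Real.cos_sq_add_sin_sq p.2]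
    simp only [B, neg_mul, LinearMap.det_toContinuousLinearMap, LinearMap.det_toLin,
      Matrix.det_fin_two_of, sub_neg_eq_add]
    ring
  symm
  calc
    ∫⁻ p, f p = ∫⁻ p in polarCoord.source, f p := by
      rw [← setLIntegral_univ]
      exact (setLIntegral_congr polarCoord_source_ae_eq_univ.symm)
    _ = ∫⁻ p in polarCoord.symm '' polarCoord.target, f p := by
      rw [OpenPartialHomeomorph.symm_image_target_eq_source]
    _ = ∫⁻ p in polarCoord.target, ENNReal.ofReal |(B p).det| * f (polarCoord.symm p) := by
      apply lintegral_image_eq_lintegral_abs_det_fderiv_mul volume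
        polarCoord.open_target.measurableSet A polarCoord.symm.injOn
    _ = ∫⁻ p in polarCoord.target, ENNReal.ofReal p.1 * f (polarCoord.symm p) := by
      apply setLIntegral_congr_fun polarCoord.open_target.measurableSet
      intro x hx
      simp only [B_det, abs_of_pos (show 0 < x.1 from hx.1)]

theorem Complex.lintegral_comp_polarCoord_symm' (f : ℂ → ENNReal) :
    (∫⁻ p in polarCoord.target, (ENNReal.ofReal p.1) * f (Complex.polarCoord.symm p)) =
      ∫⁻ p, f p := by
  have h := _root_.lintegral_comp_polarCoord_symm'
    (fun p : ℝ × ℝ => f (Complex.measurableEquivRealProd.symm p))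
  rw [← (Complex.volume_preserving_equiv_real_prod.symm).lintegral_comp_emb
    Complex.measurableEquivRealProd.symm.measurableEmbedding, ← h]
  rfl

lemma circle_sq_bound {g : ℂ → ℂ} {a : ℂ} {r ρ : ℝ} (h0 : 0 < ρ) (hρr : ρ < r)
    (hg : DifferentiableOn ℂ g (ball a r)) (hga : g a = 1) :
    2*π ≤ ∫ θ in (0:ℝ)..(2*π), ‖g (circleMap a ρ θ)‖^2 := by
  have hsub : sphere a ρ ⊆ ball a r := fun z hz => by
    rw [mem_sphere] at hz; rw [mem_ball, hz]; exact hρr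
  have hmem : ∀ θ : ℝ, circleMap a ρ θ ∈ ball a r :=
    fun θ => hsub (circleMap_mem_sphere a h0.le θ)
  have hcont : Continuous fun θ => g (circleMap a ρ θ) :=
    hg.continuousOn.comp_continuous (continuous_circleMap a ρ) hmem
  -- Cauchy integral formula
  have hC : (∮ z in C(a, ρ), (z - a)⁻¹ • g z) = (2 * ↑π * I) • g a :=
    (hg.mono (closedBall_subset_ball hρr)).circleIntegral_sub_inv_smul (mem_ball_self h0)
  rw [hga, smul_eq_mul, mul_one] at hC
  have hCI : (∮ z in C(a, ρ), (z - a)⁻¹ • g z)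
      = ∫ θ in (0:ℝ)..(2*π), I * g (circleMap a ρ θ) := by
    rw [circleIntegral]
    congr 1; funext θ
    rw [deriv_circleMap, circleMap_sub_center, smul_eq_mul, smul_eq_mul]
    have hne : circleMap 0 ρ θ ≠ 0 := by
      simpa using circleMap_ne_center (c := (0:ℂ)) h0.ne' (θ := θ)
    field_simp
  rw [hCI, intervalIntegral.integral_const_mul] at hC
  have hint : (∫ θ in (0:ℝ)..(2*π), g (circleMap a ρ θ)) = 2*(π:ℂ) := by
    have hI : (I:ℂ) ≠ 0 := I_ne_zero
    have h2' : I * (∫ θ in (0:ℝ)..(2*π), g (circleMap a ρ θ)) = I * (2*(π:ℂ)) := by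
      rw [hC]; ring
    exact mul_left_cancel₀ hI h2' 
  have h1 : 2*π ≤ ∫ θ in (0:ℝ)..(2*π), ‖g (circleMap a ρ θ)‖ := by
    calc 2*π = ‖(2*(π:ℂ) : ℂ)‖ := by
          simp [map_mul, Complex.norm_real, abs_of_pos Real.pi_pos,
            Complex.norm_two]
      _ = ‖∫ θ in (0:ℝ)..(2*π), g (circleMap a ρ θ)‖ := by rw [hint]
      _ ≤ _ := intervalIntegral.norm_integral_le_integral_norm Real.two_pi_pos.le
  have h2 : (∫ θ in (0:ℝ)..(2*π), ‖g (circleMap a ρ θ)‖)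
      ≤ ∫ θ in (0:ℝ)..(2*π), (1 + ‖g (circleMap a ρ θ)‖^2)/2 := by
    apply intervalIntegral.integral_mono_on Real.two_pi_pos.le
    · exact hcont.norm.intervalIntegrable _ _
    · exact (((continuous_const.add (hcont.norm.pow 2)).div_const 2)).intervalIntegrable _ _
    · intro θ _
      nlinarith [sq_nonneg (‖g (circleMap a ρ θ)‖ - 1)]
  rw [intervalIntegral.integral_div, intervalIntegral.integral_add (f := fun _ => (1:ℝ)) (g := fun θ => ‖g (circleMap a ρ θ)‖^2) (continuous_const.intervalIntegrable _ _)
    ((hcont.norm.pow 2).intervalIntegrable _ _ : IntervalIntegrable (fun θ => ‖g (circleMap a ρ θ)‖^2) volume 0 (2*π))] at h2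
  simp only [intervalIntegral.integral_const, smul_eq_mul, sub_zero, mul_one] at h2
  linarith [h1.trans h2]

lemma symm_eq_circleMap (ρ θ : ℝ) : Complex.polarCoord.symm (ρ, θ) = circleMap 0 ρ θ := by
  rw [Complex.polarCoord_symm_apply, circleMap, Complex.exp_mul_I]
  push_cast; ring

lemma add_symm_eq_circleMap (a : ℂ) (ρ θ : ℝ) :
    a + Complex.polarCoord.symm (ρ, θ) = circleMap a ρ θ := by
  rw [symm_eq_circleMap, circleMap, circleMap]; push_cast; ring

example (a : ℂ) (ρ θ : ℝ) : ‖Complex.polarCoord.symm (ρ, θ)‖ = |ρ| := by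
  exact Complex.norm_polarCoord_symm _

-- step: circle lower bound in lintegral form
lemma circle_lintegral_bound {g : ℂ → ℂ} {a : ℂ} {r ρ : ℝ} (h0 : 0 < ρ) (hρr : ρ < r)
    (hg : DifferentiableOn ℂ g (ball a r)) (hga : g a = 1) :
    ENNReal.ofReal (2*π) ≤
      ∫⁻ θ in Ioo (-π) π, ENNReal.ofReal (‖g (a + Complex.polarCoord.symm (ρ, θ))‖^2) := by
  have hmem : ∀ θ : ℝ, circleMap a ρ θ ∈ ball a r := fun θ => by
    have : circleMap a ρ θ ∈ sphere a ρ := circleMap_mem_sphere a h0.le θ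
    rw [mem_sphere] at this; rw [mem_ball, this]; exact hρr
  have hcont : Continuous fun θ => ‖g (circleMap a ρ θ)‖^2 :=
    ((hg.continuousOn.comp_continuous (continuous_circleMap a ρ) hmem).norm).pow 2
  have hq : ∀ θ : ℝ, ‖g (a + Complex.polarCoord.symm (ρ, θ))‖^2 = ‖g (circleMap a ρ θ)‖^2 :=
    fun θ => by rw [add_symm_eq_circleMap]
  simp_rw [hq]
  have hInt : IntegrableOn (fun θ => ‖g (circleMap a ρ θ)‖^2) (Ioo (-π) π) := by
    exact hcont.integrableOn_Icc.mono_set Ioo_subset_Icc_self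
  rw [← ofReal_integral_eq_lintegral_ofReal hInt
    (Filter.Eventually.of_forall fun θ => by positivity)]
  apply ENNReal.ofReal_le_ofReal
  have hper : Function.Periodic (fun θ => ‖g (circleMap a ρ θ)‖^2) (2*π) :=
    (periodic_circleMap a ρ).comp fun z => ‖g z‖^2
  have heq : (∫ θ in Ioo (-π) π, ‖g (circleMap a ρ θ)‖^2)
      = ∫ θ in (0:ℝ)..(2*π), ‖g (circleMap a ρ θ)‖^2 := by
    rw [← integral_Ioc_eq_integral_Ioo,
      ← intervalIntegral.integral_of_le (by linarith [Real.pi_pos] : (-π:ℝ) ≤ π)]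
    have := hper.intervalIntegral_add_eq (-π) 0
    rw [show (-π) + 2*π = π by ring, zero_add] at this
    exact this
  rw [heq]
  exact circle_sq_bound h0 hρr hg hga

lemma key_lower {g : ℂ → ℂ} {a : ℂ} {r s : ℝ} (hr : 0 < r) (hs : 0 ≤ s)
    (hg : DifferentiableOn ℂ g (ball a r)) (hga : g a = 1) :
    ENNReal.ofReal (π * r^2/2 * Real.exp (s * (r/2)^2)) ≤
      ∫⁻ z in ball a r, ENNReal.ofReal (‖g z‖^2 * Real.exp (s * ‖z-a‖^2)) := by
  set K : ℂ → ℝ≥0∞ := (ball (0:ℂ) r).indicator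
    (fun w => ENNReal.ofReal (‖g (a+w)‖^2 * Real.exp (s * ‖w‖^2))) with hK
  have hTrans : (∫⁻ z in ball a r,
      ENNReal.ofReal (‖g z‖^2 * Real.exp (s * ‖z-a‖^2))) = ∫⁻ w, K w := by
    rw [← lintegral_indicator measurableSet_ball]
    have : ∀ z : ℂ, (ball a r).indicator
        (fun z => ENNReal.ofReal (‖g z‖^2 * Real.exp (s * ‖z-a‖^2))) z
        = K (z + (-a)) := by
      intro z
      have hmem : z + (-a) ∈ ball (0:ℂ) r ↔ z ∈ ball a r := by
        simp [mem_ball, dist_eq_norm, sub_eq_add_neg]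
      by_cases hz : z ∈ ball a r
      · rw [indicator_of_mem hz, hK, indicator_of_mem (hmem.2 hz)]
        simp [sub_eq_add_neg]
      · rw [indicator_of_notMem hz, hK, indicator_of_notMem (fun h => hz (hmem.1 h))]
    simp_rw [this]
    exact lintegral_add_right_eq_self K (-a)
  rw [hTrans, ← Complex.lintegral_comp_polarCoord_symm' K]
  set A : Set (ℝ × ℝ) := Ioo (r/2) r ×ˢ Ioo (-π) π with hA
  have hAsub : A ⊆ polarCoord.target := by
    rintro ⟨ρ, θ⟩ ⟨h1, h2⟩
    exact ⟨lt_trans (by linarith) h1.1, h2⟩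
  have hAm : MeasurableSet A := (measurableSet_Ioo).prod measurableSet_Ioo
  have step1 : (∫⁻ p in A, (ENNReal.ofReal p.1) * K (Complex.polarCoord.symm p))
      ≤ ∫⁻ p in polarCoord.target, (ENNReal.ofReal p.1) * K (Complex.polarCoord.symm p) :=
    lintegral_mono_set hAsub
  refine le_trans ?_ step1
  -- pointwise lower bound on A
  have hpt : ∀ p ∈ A, ENNReal.ofReal (r/2 * Real.exp (s * (r/2)^2)) *
      ENNReal.ofReal (‖g (a + Complex.polarCoord.symm p)‖^2)
      ≤ (ENNReal.ofReal p.1) * K (Complex.polarCoord.symm p) := by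
    rintro ⟨ρ, θ⟩ ⟨h1, h2⟩
    have hρ0 : 0 < ρ := lt_trans (by linarith) h1.1
    have habs : ‖Complex.polarCoord.symm (ρ, θ)‖ = ρ := by
      rw [Complex.norm_polarCoord_symm, abs_of_pos hρ0]
    have hmem : Complex.polarCoord.symm (ρ, θ) ∈ ball (0:ℂ) r := by
      rw [mem_ball_zero_iff] at *
      rw [habs]; exact h1.2
    rw [hK, indicator_of_mem hmem, habs]
    rw [← ENNReal.ofReal_mul (by positivity), ← ENNReal.ofReal_mul (by positivity)]
    apply ENNReal.ofReal_le_ofReal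
    have hexp : Real.exp (s * (r/2)^2) ≤ Real.exp (s * ρ^2) := by
      apply Real.exp_le_exp.2
      apply mul_le_mul_of_nonneg_left _ hs
      have : r/2 ≤ ρ := h1.1.le
      nlinarith
    have hgnn : (0:ℝ) ≤ ‖g (a + Complex.polarCoord.symm (ρ, θ))‖^2 := by positivity
    calc r/2 * Real.exp (s * (r/2)^2) * ‖g (a + Complex.polarCoord.symm (ρ, θ))‖^2
        ≤ ρ * Real.exp (s * ρ^2) * ‖g (a + Complex.polarCoord.symm (ρ, θ))‖^2 := by
          apply mul_le_mul_of_nonneg_right _ hgnn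
          apply mul_le_mul h1.1.le hexp (by positivity) hρ0.le
      _ = ρ * (‖g (a + Complex.polarCoord.symm (ρ, θ))‖^2 * Real.exp (s * ρ^2)) := by ring
  have step2 : (∫⁻ p in A, ENNReal.ofReal (r/2 * Real.exp (s * (r/2)^2)) *
      ENNReal.ofReal (‖g (a + Complex.polarCoord.symm p)‖^2))
      ≤ ∫⁻ p in A, (ENNReal.ofReal p.1) * K (Complex.polarCoord.symm p) := by
    apply lintegral_mono_ae
    rw [ae_restrict_iff' hAm]
    exact Filter.Eventually.of_forall hpt
  refine le_trans ?_ step2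
  rw [lintegral_const_mul' _ _ ENNReal.ofReal_ne_top]
  -- Tonelli
  have hTon : (∫⁻ p in A, ENNReal.ofReal (‖g (a + Complex.polarCoord.symm p)‖^2))
      ≥ ENNReal.ofReal (2*π) * ENNReal.ofReal (r/2) := by
    have hrestr : (volume : Measure (ℝ × ℝ)).restrict A
        = ((volume : Measure ℝ).restrict (Ioo (r/2) r)).prod
          ((volume : Measure ℝ).restrict (Ioo (-π) π)) := by
      rw [Measure.volume_eq_prod]
      exact (Measure.prod_restrict _ _).symm
    rw [hrestr]
    have hmeas : AEMeasurable (fun p : ℝ × ℝ =>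
        ENNReal.ofReal (‖g (a + Complex.polarCoord.symm p)‖^2))
        ((volume.restrict (Ioo (r/2) r)).prod (volume.restrict (Ioo (-π) π))) := by
      rw [← hrestr]
      have hsymmc : Continuous fun p : ℝ × ℝ => Complex.polarCoord.symm p := by
        simp_rw [Complex.polarCoord_symm_apply]
        fun_prop
      have hmapsto : MapsTo (fun p : ℝ × ℝ => a + Complex.polarCoord.symm p) A (ball a r) := by
        rintro ⟨ρ, θ⟩ ⟨h1, _⟩
        have hρ0 : 0 < ρ := lt_trans (by linarith) h1.1
        rw [mem_ball, dist_eq_norm, add_sub_cancel_left,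
          Complex.norm_polarCoord_symm, abs_of_pos hρ0]
        exact h1.2
      have hcOn : ContinuousOn (fun p : ℝ × ℝ =>
          ENNReal.ofReal (‖g (a + Complex.polarCoord.symm p)‖^2)) A := by
        apply ENNReal.continuous_ofReal.comp_continuousOn
        apply ContinuousOn.pow
        apply ContinuousOn.norm
        exact hg.continuousOn.comp ((continuous_const.add hsymmc).continuousOn) hmapsto
      exact hcOn.aemeasurable hAm
    rw [lintegral_prod _ hmeas]
    have inner : ∀ ρ ∈ Ioo (r/2) r, ENNReal.ofReal (2*π) ≤
        ∫⁻ θ in Ioo (-π) π, ENNReal.ofReal (‖g (a + Complex.polarCoord.symm (ρ, θ))‖^2) := by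
      intro ρ hρ
      exact circle_lintegral_bound (by have := hρ.1; linarith) hρ.2 hg hga
    calc ENNReal.ofReal (2*π) * ENNReal.ofReal (r/2)
        = ∫⁻ _ in Ioo (r/2) r, ENNReal.ofReal (2*π) := by
          rw [setLIntegral_const, Real.volume_Ioo]
          congr 1
          congr 1
          ring
      _ ≤ _ := by
          apply lintegral_mono_ae
          rw [ae_restrict_iff' measurableSet_Ioo]
          exact Filter.Eventually.of_forall inner
  calc ENNReal.ofReal (π * r^2/2 * Real.exp (s * (r/2)^2))
      = ENNReal.ofReal (r/2 * Real.exp (s * (r/2)^2)) *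
        (ENNReal.ofReal (2*π) * ENNReal.ofReal (r/2)) := by
        rw [← ENNReal.ofReal_mul (by positivity), ← ENNReal.ofReal_mul (by positivity)]
        congr 1
        ring
    _ ≤ _ := mul_le_mul_right hTon _

lemma complex_smul_decomp (w : ℂ) : w = w.re • (1:ℂ) + w.im • I := by
  rw [Complex.real_smul, Complex.real_smul, mul_one, Complex.re_add_im]

lemma clm_decomp (T : ℂ →L[ℝ] ℝ) (w : ℂ) : T w = w.re * T 1 + w.im * T I := by
  conv_lhs => rw [complex_smul_decomp w]
  rw [T.map_add, T.map_smul, T.map_smul, smul_eq_mul, smul_eq_mul]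

lemma clm_decomp2 (T : ℂ →L[ℝ] ℂ →L[ℝ] ℝ) (w : ℂ) :
    T w w = w.re^2 * T 1 1 + w.re*w.im * (T 1 I + T I 1) + w.im^2 * T I I := by
  conv_lhs => rw [complex_smul_decomp w]
  rw [T.map_add, T.map_smul, T.map_smul]
  simp only [ContinuousLinearMap.add_apply, ContinuousLinearMap.coe_smul',
    Pi.smul_apply, smul_eq_mul, ContinuousLinearMap.map_add, ContinuousLinearMap.map_smul]
  ring

lemma taylor_bound {Ω : Set ℂ} (hΩo : IsOpen Ω) {φ : ℂ → ℝ}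
    (hφ : ContDiffOn ℝ 2 φ Ω) {a : ℂ} (ha : a ∈ Ω) (hdneg : dzdzbar φ a < 0) :
    ∃ c : ℝ, 0 < c ∧ ∃ r : ℝ, 0 < r ∧ closedBall a r ⊆ Ω ∧ ∃ α β : ℂ,
      ∀ w : ℂ, ‖w‖ ≤ r →
        φ (a + w) ≤ φ a + 2*(α*w + β*w^2).re - c * ‖w‖^2 := by
  set F := fderiv ℝ φ with hFdef
  set H := fderiv ℝ F with hHdef
  have hF : ContDiffOn ℝ 1 F Ω := hφ.fderiv_of_isOpen hΩo le_rfl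
  have hHcont : ContinuousOn H Ω := hF.continuousOn_fderiv_of_isOpen hΩo le_rfl
  have hFd : ∀ z ∈ Ω, HasFDerivAt φ (F z) z := fun z hz =>
    ((hφ.differentiableOn (by norm_num)).differentiableAt (hΩo.mem_nhds hz)).hasFDerivAt
  have hHd : ∀ z ∈ Ω, HasFDerivAt F (H z) z := fun z hz =>
    ((hF.differentiableOn one_ne_zero).differentiableAt (hΩo.mem_nhds hz)).hasFDerivAt
  have happly : ∀ v u : ℂ, fderiv ℝ (fun z => F z v) a u = H a u v := by
    intro v u
    have h1 : HasFDerivAt (fun z => F z v)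
        ((ContinuousLinearMap.apply ℝ ℝ v).comp (H a)) a :=
      (ContinuousLinearMap.apply ℝ ℝ v).hasFDerivAt.comp a (hHd a ha)
    rw [h1.fderiv]
    rfl
  have hd4 : dzdzbar φ a = (H a 1 1 + H a I I)/4 := by
    simp only [dzdzbar]
    rw [← hFdef, happly, happly]; ring
  set d := dzdzbar φ a with hddef
  set ε := -d with hεdef
  have hε : 0 < ε := by simp [hεdef]; linarith
  -- continuity of H at a
  have hHa : ContinuousAt H a := hHcont.continuousAt (hΩo.mem_nhds ha)
  obtain ⟨δ, hδ, hδH⟩ := (Metric.continuousAt_iff (f := H) (a := a)).1 hHa ε hε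
  obtain ⟨ε₁, hε₁, hball⟩ := Metric.isOpen_iff.1 hΩo a ha
  set r := min (δ/2) (ε₁/2) with hrdef
  have hr : 0 < r := lt_min (by linarith) (by linarith)
  have hrΩ : closedBall a r ⊆ Ω := by
    intro z hz
    apply hball
    rw [mem_closedBall] at hz
    rw [mem_ball]
    calc dist z a ≤ r := hz
      _ ≤ ε₁/2 := min_le_right _ _
      _ < ε₁ := by linarith
  have hHr : ∀ z ∈ closedBall a r, ‖H z - H a‖ ≤ ε := by
    intro z hz
    rw [mem_closedBall] at hz
    have : dist z a < δ := lt_of_le_of_lt hz (lt_of_le_of_lt (min_le_left _ _) (by linarith))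
    have := hδH this
    exact (dist_eq_norm (H z) (H a) ▸ this).le
  -- the quadratic/linear coefficients
  set α : ℂ := Complex.ofReal (F a 1 / 2) - Complex.ofReal (F a I / 2) * I with hαdef
  set β : ℂ := Complex.ofReal ((H a 1 1 - H a I I)/8)
    - Complex.ofReal ((H a 1 I + H a I 1)/8) * I with hβdef
  refine ⟨ε/2, by linarith, r, hr, hrΩ, α, β, ?_⟩
  intro w hw
  -- the line segment
  set γ : ℝ → ℂ := fun t => a + t • w with hγdef
  have hline : ∀ t : ℝ, t ∈ Icc (0:ℝ) 1 → γ t ∈ closedBall a r := by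
    intro t ht
    rw [mem_closedBall, hγdef]
    simp only [dist_eq_norm, add_sub_cancel_left, norm_smul, Real.norm_eq_abs]
    calc |t| * ‖w‖ ≤ 1 * r := by
          apply mul_le_mul (abs_le.2 ⟨by linarith [ht.1], ht.2⟩) ?_ (norm_nonneg w) zero_le_one
          exact hw
      _ = r := one_mul r
  have hγd : ∀ t : ℝ, HasDerivAt γ w t := fun t => by
    have := ((hasDerivAt_id' t).smul_const w).const_add a; rw [one_smul] at this; exact this
  set u : ℝ → ℝ := fun t => φ (γ t) with hudef
  set v : ℝ → ℝ := fun t => F (γ t) w with hvdef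
  have hu : ∀ t ∈ Icc (0:ℝ) 1, HasDerivAt u (v t) t := fun t ht =>
    (hFd (γ t) (hrΩ (hline t ht))).comp_hasDerivAt t (hγd t)
  have hv : ∀ t ∈ Icc (0:ℝ) 1, HasDerivAt v (H (γ t) w w) t := by
    intro t ht
    have h1 : HasFDerivAt (fun z => F z w)
        ((ContinuousLinearMap.apply ℝ ℝ w).comp (H (γ t))) (γ t) :=
      (ContinuousLinearMap.apply ℝ ℝ w).hasFDerivAt.comp (γ t) (hHd (γ t) (hrΩ (hline t ht)))
    exact h1.comp_hasDerivAt t (hγd t)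
  set Kq : ℝ := H a w w + ε * ‖w‖^2 with hKdef
  have hK : ∀ t ∈ Icc (0:ℝ) 1, H (γ t) w w ≤ Kq := by
    intro t ht
    have h1 : ‖H (γ t) - H a‖ ≤ ε := hHr _ (hline t ht)
    have h2 : H (γ t) w w - H a w w = ((H (γ t) - H a) w) w := by simp
    have h3 : |((H (γ t) - H a) w) w| ≤ ‖H (γ t) - H a‖ * ‖w‖ * ‖w‖ := by
      calc |((H (γ t) - H a) w) w| ≤ ‖(H (γ t) - H a) w‖ * ‖w‖ := by
            exact ((H (γ t) - H a) w).le_opNorm w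
        _ ≤ ‖H (γ t) - H a‖ * ‖w‖ * ‖w‖ := by
            apply mul_le_mul_of_nonneg_right ((H (γ t) - H a).le_opNorm w) (norm_nonneg w)
    have h4 : ‖H (γ t) - H a‖ * ‖w‖ * ‖w‖ ≤ ε * ‖w‖ * ‖w‖ := by
      apply mul_le_mul_of_nonneg_right _ (norm_nonneg w)
      exact mul_le_mul_of_nonneg_right h1 (norm_nonneg w)
    rw [hKdef]
    have h5 : ‖w‖ ^ 2 = ‖w‖ * ‖w‖ := by
      ring
    rw [h5]
    have := abs_le.1 (h3.trans h4)
    linarith [this.2, (abs_le.1 h3).2]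
  -- first antitone step
  set p : ℝ → ℝ := fun t => v t - v 0 - Kq * t with hpdef
  have hp : ∀ t ∈ Icc (0:ℝ) 1, HasDerivAt p (H (γ t) w w - Kq) t := by
    intro t ht
    have := ((hv t ht).sub_const (v 0)).sub (by simpa using (hasDerivAt_id t).const_mul Kq)
    simpa [hpdef, Pi.sub_def] using this
  have hpanti : AntitoneOn p (Icc (0:ℝ) 1) := by
    apply antitoneOn_of_deriv_nonpos (convex_Icc 0 1)
    · exact fun t ht => (hp t ht).continuousAt.continuousWithinAt
    · intro t ht
      rw [interior_Icc] at ht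
      exact (hp t (Ioo_subset_Icc_self ht)).differentiableAt.differentiableWithinAt
    · intro t ht
      rw [interior_Icc] at ht
      rw [(hp t (Ioo_subset_Icc_self ht)).deriv]
      linarith [hK t (Ioo_subset_Icc_self ht)]
  have hp0 : ∀ t ∈ Icc (0:ℝ) 1, p t ≤ 0 := by
    intro t ht
    have := hpanti (left_mem_Icc.2 zero_le_one) ht ht.1
    simpa [hpdef] using this
  -- second antitone step
  set q : ℝ → ℝ := fun t => u t - u 0 - v 0 * t - Kq/2 * t^2 with hqdef
  have hq : ∀ t ∈ Icc (0:ℝ) 1, HasDerivAt q (p t) t := by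
    intro t ht
    have h1 : HasDerivAt (fun t : ℝ => Kq/2 * t^2) (Kq/2 * (2*t)) t := by
      simpa using (hasDerivAt_pow 2 t).const_mul (Kq/2)
    have := (((hu t ht).sub_const (u 0)).sub
      (by simpa using (hasDerivAt_id t).const_mul (v 0))).sub h1
    have h2 : v t - v 0 - Kq * t = v t - u 0*0 - v 0 - Kq/2*(2*t) := by ring
    simpa [hqdef, hpdef, h2, Pi.sub_def] using this
  have hqanti : AntitoneOn q (Icc (0:ℝ) 1) := by
    apply antitoneOn_of_deriv_nonpos (convex_Icc 0 1)
    · exact fun t ht => (hq t ht).continuousAt.continuousWithinAt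
    · intro t ht
      rw [interior_Icc] at ht
      exact (hq t (Ioo_subset_Icc_self ht)).differentiableAt.differentiableWithinAt
    · intro t ht
      rw [interior_Icc] at ht
      rw [(hq t (Ioo_subset_Icc_self ht)).deriv]
      exact hp0 t (Ioo_subset_Icc_self ht)
  have hfinal : u 1 ≤ u 0 + v 0 + Kq/2 := by
    have := hqanti (left_mem_Icc.2 zero_le_one) (right_mem_Icc.2 zero_le_one) zero_le_one
    simp only [hqdef, one_pow, mul_one, mul_zero] at this
    nlinarith [this]
  have hu1 : u 1 = φ (a + w) := by simp [hudef, hγdef]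
  have hu0 : u 0 = φ a := by simp [hudef, hγdef]
  have hv0 : v 0 = F a w := by simp [hvdef, hγdef]
  have key : φ a + F a w + Kq/2
      = φ a + 2*(α*w + β*w^2).re - ε/2 * ‖w‖^2 := by
    have habs : ‖w‖^2 = w.re^2 + w.im^2 := by
      rw [Complex.sq_norm, Complex.normSq_apply]; ring
    rw [hKdef, clm_decomp (F a) w, clm_decomp2 (H a) w, habs, hεdef, hd4]
    simp only [hαdef, hβdef, Complex.add_re, Complex.mul_re, Complex.sub_re, Complex.sub_im,
      Complex.ofReal_re, Complex.ofReal_im, Complex.mul_im, Complex.I_re, Complex.I_im,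
      pow_two, Complex.add_im]
    ring
  rw [hu1, hu0, hv0] at hfinal
  rw [key] at hfinal
  exact hfinal

end Aux

section Main
open Set
open scoped Real ENNReal

/-- If `(1/m)·log L_{mφ}(a,r) → 0` as `m → ∞` for every `(a,r) ∈ Ω_δ`,
then `φ` is subharmonic on `Ω`, i.e. `∂²φ/∂z∂z̄ ≥ 0` on `Ω`. -/
theorem stmt5 (Ω : Set ℂ) (hΩo : IsOpen Ω) (hΩc : IsConnected Ω)
    (hΩb : Bornology.IsBounded Ω)
    (φ : ℂ → ℝ) (hφ : ContDiffOn ℝ ∞ φ Ω)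
    (hlim : ∀ a ∈ Ω, ∀ r : ℝ, 0 < r → (r : EReal) < delta Ω a →
      Filter.Tendsto (fun m : ℕ => Real.log (Lindex (fun z => (m : ℝ) * φ z) a r) / (m : ℝ))
        Filter.atTop (nhds 0)) :
    ∀ a ∈ Ω, 0 ≤ dzdzbar φ a := by
  intro a ha
  by_contra hneg
  push_neg at hneg
  have hφ2 : ContDiffOn ℝ 2 φ Ω := hφ.of_le (by norm_cast)
  obtain ⟨c, hc, r₁, hr₁, hsub₁, α, β, hTay⟩ := taylor_bound hΩo hφ2 ha hneg
  set r := r₁/2 with hrdef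
  have hr : 0 < r := by positivity
  have hrr₁ : r < r₁ := by rw [hrdef]; linarith
  have hsub : closedBall a r ⊆ Ω :=
    (closedBall_subset_closedBall hrr₁.le).trans hsub₁
  have hδ : (r : EReal) < delta Ω a := by
    have hmem : ((r₁ : ℝ) : EReal) ∈
        {x : EReal | ∃ ρ : ℝ, x = (ρ : EReal) ∧ 0 < ρ ∧ ball a ρ ⊆ Ω} :=
      ⟨r₁, rfl, hr₁, ball_subset_closedBall.trans hsub₁⟩
    refine lt_of_lt_of_le ?_ (le_sSup hmem)
    exact_mod_cast hrr₁
  have hTendsto := hlim a ha r hr hδ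
  set L : ℝ := c * (r/2)^2 with hLdef
  have hL : 0 < L := by positivity
  -- the lower bound for Lindex
  have hLB : ∀ m : ℕ, 1/2 * Real.exp (m * L) ≤ Lindex (fun z => (m : ℝ) * φ z) a r := by
    intro m
    have hexpφa : (0:ℝ) < Real.exp (-((m:ℝ) * φ a)) := Real.exp_pos _
    have hD : (0:ℝ) < Real.pi * r^2 * Real.exp (-((m:ℝ) * φ a)) := by positivity
    apply le_csInf
    · -- nonempty : constant 1
      refine ⟨(∫ z in ball a r, ‖(1:ℂ)‖ ^ 2 * Real.exp (-((m:ℝ) * φ z))) /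
        (Real.pi * r ^ 2 * Real.exp (-((m:ℝ) * φ a))), (fun _ => (1:ℂ)), ?_, ?_, rfl, rfl⟩
      · exact (differentiable_const (1:ℂ)).differentiableOn
      · have hcont : ContinuousOn (fun z => ‖(1:ℂ)‖ ^ 2 * Real.exp (-((m:ℝ) * φ z)))
            (closedBall a r) := by
          apply ContinuousOn.mul continuousOn_const
          exact Real.continuous_exp.comp_continuousOn
            ((continuousOn_const.mul (hφ.continuousOn.mono hsub)).neg)
        exact (hcont.integrableOn_compact (isCompact_closedBall a r)).mono_set
          ball_subset_closedBall
    · rintro t ⟨f, hdiff, hint, hfa, rfl⟩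
      set Q : ℂ → ℂ := fun w => α*w + β*w^2 with hQdef
      set g : ℂ → ℂ := fun z => f z * Complex.exp (-(m:ℂ) * Q (z - a)) with hgdef
      have hgdiff : DifferentiableOn ℂ g (ball a r) := by
        apply hdiff.mul
        apply DifferentiableOn.cexp
        apply DifferentiableOn.const_mul
        apply DifferentiableOn.add
        · exact (differentiable_const α).differentiableOn.mul
            ((differentiable_id.sub_const a).differentiableOn)
        · exact (differentiable_const β).differentiableOn.mul
            (((differentiable_id.sub_const a).pow 2).differentiableOn)
      have hga : g a = 1 := by
        simp [hgdef, hQdef, hfa]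
      -- norm of g
      have hgnorm : ∀ z : ℂ, ‖g z‖^2
          = ‖f z‖^2 * Real.exp (-((m:ℝ) * (2 * (Q (z-a)).re))) := by
        intro z
        have hre : ((-(m:ℂ)) * Q (z-a)).re = -((m:ℝ) * (Q (z-a)).re) := by
          have h1 : (-(m:ℂ)) = (((-(m:ℝ)) : ℝ) : ℂ) := by push_cast; ring
          rw [h1, Complex.re_ofReal_mul]; ring
        rw [hgdef]
        simp only [norm_mul, mul_pow]
        rw [Complex.norm_exp, hre, ← Real.exp_nat_mul]
        congr 1
        push_cast
        ring
      -- pointwise comparison on the ball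
      have hpt : ∀ z ∈ ball a r,
          Real.exp (-((m:ℝ) * φ a)) * (‖g z‖^2 *
            Real.exp (((m:ℝ)*c) * ‖z-a‖^2))
          ≤ ‖f z‖^2 * Real.exp (-((m:ℝ) * φ z)) := by
        intro z hz
        have habsr : ‖z - a‖ ≤ r₁ := by
          rw [mem_ball, dist_eq_norm] at hz
          exact (le_of_lt hz).trans hrr₁.le
        have hT := hTay (z - a) habsr
        rw [add_sub_cancel] at hT
        have hT' : (m:ℝ) * φ z ≤ (m:ℝ) * φ a + (m:ℝ) * (2*(Q (z-a)).re)
            - ((m:ℝ)*c) * ‖z-a‖^2 := by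
          have hm : (0:ℝ) ≤ m := Nat.cast_nonneg m
          have := mul_le_mul_of_nonneg_left hT hm
          rw [hQdef]
          nlinarith [this]
        rw [hgnorm z]
        have hnn : (0:ℝ) ≤ ‖f z‖^2 := by positivity
        have hcomb : Real.exp (-((m:ℝ) * φ a)) *
            (Real.exp (-((m:ℝ)*(2*(Q (z-a)).re))) *
              Real.exp (((m:ℝ)*c) * ‖z-a‖^2))
            ≤ Real.exp (-((m:ℝ) * φ z)) := by
          rw [← Real.exp_add, ← Real.exp_add]
          apply Real.exp_le_exp.2
          linarith
        nlinarith [mul_le_mul_of_nonneg_left hcomb hnn]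
      -- integral lower bound via key_lower
      set s : ℝ := (m:ℝ)*c with hsdef
      have hs : 0 ≤ s := by positivity
      set C : ℝ := Real.exp (-((m:ℝ) * φ a)) * (π * r^2/2 * Real.exp (s * (r/2)^2))
        with hCdef
      have hC : (0:ℝ) < C := by positivity
      have hI1 : ENNReal.ofReal C ≤
          ∫⁻ z in ball a r, ENNReal.ofReal (Real.exp (-((m:ℝ) * φ a)) *
            (‖g z‖^2 * Real.exp (s * ‖z-a‖^2))) := by
        calc ENNReal.ofReal C
            = ENNReal.ofReal (Real.exp (-((m:ℝ) * φ a))) *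
              ENNReal.ofReal (π * r^2/2 * Real.exp (s * (r/2)^2)) := by
              rw [hCdef, ENNReal.ofReal_mul (by positivity)]
          _ ≤ ENNReal.ofReal (Real.exp (-((m:ℝ) * φ a))) *
              ∫⁻ z in ball a r, ENNReal.ofReal
                (‖g z‖^2 * Real.exp (s * ‖z-a‖^2)) :=
              mul_le_mul_right (key_lower hr hs hgdiff hga) _
          _ = _ := by
              rw [← lintegral_const_mul' _ _ ENNReal.ofReal_ne_top]
              congr 1
              funext z
              rw [← ENNReal.ofReal_mul (by positivity)]
      have hI2 : (∫⁻ z in ball a r, ENNReal.ofReal (Real.exp (-((m:ℝ) * φ a)) *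
            (‖g z‖^2 * Real.exp (s * ‖z-a‖^2))))
          ≤ ∫⁻ z in ball a r, ENNReal.ofReal (‖f z‖^2 * Real.exp (-((m:ℝ) * φ z))) := by
        apply lintegral_mono_ae
        rw [ae_restrict_iff' measurableSet_ball]
        exact Filter.Eventually.of_forall fun z hz => ENNReal.ofReal_le_ofReal (hpt z hz)
      have hI3 : (∫⁻ z in ball a r, ENNReal.ofReal (‖f z‖^2 * Real.exp (-((m:ℝ) * φ z))))
          = ENNReal.ofReal (∫ z in ball a r, ‖f z‖^2 * Real.exp (-((m:ℝ) * φ z))) := by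
        rw [ofReal_integral_eq_lintegral_ofReal hint
          (Filter.Eventually.of_forall fun z => by positivity)]
      have hnum : C ≤ ∫ z in ball a r, ‖f z‖^2 * Real.exp (-((m:ℝ) * φ z)) := by
        have h0 : (0:ℝ) ≤ ∫ z in ball a r, ‖f z‖^2 * Real.exp (-((m:ℝ) * φ z)) :=
          setIntegral_nonneg measurableSet_ball (fun z _ => by positivity)
        have := (hI1.trans hI2).trans_eq hI3
        exact (ENNReal.ofReal_le_ofReal_iff h0).1 this
      -- conclude division bound
      have hmL : (m:ℝ)*L = s*((r/2)^2) := by rw [hLdef, hsdef]; ring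
      have hEC : 1/2 * Real.exp (m * L)
          = C / (Real.pi * r ^ 2 * Real.exp (-((m:ℝ) * φ a))) := by
        rw [eq_div_iff hD.ne', hmL, hCdef]
        ring
      rw [hEC]
      gcongr
  -- now the limit argument
  have hlog : ∀ m : ℕ, 1 ≤ m → (Real.log (1/2) + m * L) / m
      ≤ Real.log (Lindex (fun z => (m : ℝ) * φ z) a r) / m := by
    intro m hm
    have hm' : (0:ℝ) < m := by exact_mod_cast hm
    have h1 : Real.log (1/2 * Real.exp (m*L))
        ≤ Real.log (Lindex (fun z => (m : ℝ) * φ z) a r) :=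
      Real.log_le_log (by positivity) (hLB m)
    rw [Real.log_mul (by norm_num) (Real.exp_ne_zero _), Real.log_exp] at h1
    gcongr
  have hseq : Filter.Tendsto (fun m : ℕ => (Real.log (1/2) + m*L)/m)
      Filter.atTop (nhds L) := by
    have h1 : Filter.Tendsto (fun m : ℕ => Real.log (1/2) * (1/(m:ℝ)) + L)
        Filter.atTop (nhds (Real.log (1/2) * 0 + L)) :=
      (tendsto_const_nhds.mul tendsto_one_div_atTop_nhds_zero_nat).add tendsto_const_nhds
    rw [mul_zero, zero_add] at h1
    apply h1.congr'
    filter_upwards [Filter.eventually_ge_atTop 1] with m hm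
    have hm' : (m:ℝ) ≠ 0 := Nat.cast_ne_zero.2 (by omega)
    field_simp
  have hfinal : L ≤ 0 := by
    apply le_of_tendsto_of_tendsto hseq hTendsto
    filter_upwards [Filter.eventually_ge_atTop 1] with m hm
    exact hlog m hm
  linarith

end Main
end

section
/- Let Ω ⊂ ℂ be a bounded domain and φ a smooth real-valued function on Ω. Then for every a ∈ Ω, lim_{r → 0⁺} L_φ(a,r) = 1. -/
open MeasureTheory Metric Complex
open scoped ContDiff

lemma circle_bound {f : ℂ → ℂ} {a : ℂ} {r : ℝ}
    (hf : DifferentiableOn ℂ f (ball a r)) (hfa : f a = 1)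
    {x : ℝ} (hx : 0 < x) (hxr : x < r) :
    2 * Real.pi ≤ ∫ θ in (0:ℝ)..(2*Real.pi), ‖f (circleMap a x θ)‖ ^ 2 := by
  have hsub : closedBall a x ⊆ ball a r := closedBall_subset_ball hxr
  have hc : ContinuousOn f (closedBall a x) := hf.continuousOn.mono hsub
  have hd : ∀ z ∈ ball a x \ (∅ : Set ℂ), DifferentiableAt ℂ f z := by
    intro z hz
    exact hf.differentiableAt (isOpen_ball.mem_nhds (hsub (ball_subset_closedBall hz.1)))
  have key := Complex.circleIntegral_sub_center_inv_smul_of_differentiable_on_off_countable hx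
    Set.countable_empty hc hd
  have hmem : ∀ θ : ℝ, circleMap a x θ ∈ ball a r := by
    intro θ
    have := circleMap_mem_closedBall a hx.le θ
    exact hsub this
  have hcont : Continuous fun θ => f (circleMap a x θ) :=
    hf.continuousOn.comp_continuous (continuous_circleMap a x) hmem
  -- unfold circle integral
  have e1 : (∮ z in C(a, x), (z - a)⁻¹ • f z)
      = I * ∫ θ in (0:ℝ)..(2*Real.pi), f (circleMap a x θ) := by
    rw [circleIntegral, ← intervalIntegral.integral_const_mul]
    congr 1; funext θ
    have hne : circleMap 0 x θ ≠ 0 := by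
      simpa using circleMap_ne_center (c := (0:ℂ)) hx.ne' (θ := θ)
    rw [deriv_circleMap, circleMap_sub_center, smul_eq_mul, smul_eq_mul]
    field_simp
  rw [e1, hfa, smul_eq_mul, mul_one] at key
  have hX : (∫ θ in (0:ℝ)..(2*Real.pi), f (circleMap a x θ)) = 2 * Real.pi := by
    have := mul_left_cancel₀ I_ne_zero (by rw [key]; ring : I * (∫ θ in (0:ℝ)..(2*Real.pi), f (circleMap a x θ)) = I * (2 * Real.pi : ℂ))
    exact_mod_cast this
  have h2 : 2 * Real.pi ≤ ∫ θ in (0:ℝ)..(2*Real.pi), ‖f (circleMap a x θ)‖ := by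
    calc 2 * Real.pi = ‖(∫ θ in (0:ℝ)..(2*Real.pi), f (circleMap a x θ))‖ := by
          rw [hX]
          rw [show ((2:ℂ) * Real.pi) = ((2*Real.pi : ℝ) : ℂ) by push_cast; ring]
          rw [Complex.norm_real, Real.norm_eq_abs, _root_.abs_of_nonneg Real.two_pi_pos.le]
      _ ≤ _ := intervalIntegral.norm_integral_le_integral_norm Real.two_pi_pos.le
  have h3 : (∫ θ in (0:ℝ)..(2*Real.pi), ‖f (circleMap a x θ)‖)
      ≤ ∫ θ in (0:ℝ)..(2*Real.pi), (1/2 + ‖f (circleMap a x θ)‖^2/2) := by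
    apply intervalIntegral.integral_mono_on Real.two_pi_pos.le
    · exact (hcont.norm).intervalIntegrable _ _
    · exact ((continuous_const.add ((hcont.norm.pow 2).div_const 2))).intervalIntegrable _ _
    · intro θ _
      nlinarith [sq_nonneg (‖f (circleMap a x θ)‖ - 1)]
  have h4 : (∫ θ in (0:ℝ)..(2*Real.pi), (1/2 + ‖f (circleMap a x θ)‖^2/2))
      = Real.pi + (∫ θ in (0:ℝ)..(2*Real.pi), ‖f (circleMap a x θ)‖^2)/2 := by
    rw [intervalIntegral.integral_add (f := fun _ => (1/2:ℝ)) (g := fun θ => ‖f (circleMap a x θ)‖^2/2) (intervalIntegrable_const)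
      (((hcont.norm.pow 2).div_const 2).intervalIntegrable _ _)]
    simp [intervalIntegral.integral_div]
    ring
  nlinarith [h2.trans (h3.trans_eq h4)]

set_option maxHeartbeats 1000000 in
lemma polar_ball_bound {f : ℂ → ℂ} {a : ℂ} {r : ℝ}
    (hf : DifferentiableOn ℂ f (ball a r)) (hfa : f a = 1)
    {s : ℝ} (hs : 0 < s) (hsr : s < r) :
    Real.pi * s ^ 2 ≤ ∫ z in ball a s, ‖f z‖ ^ 2 := by
  have hsymm : ∀ p : ℝ × ℝ, a + Complex.polarCoord.symm p = circleMap a p.1 p.2 := by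
    intro p
    rw [Complex.polarCoord_symm_apply, circleMap, Complex.exp_mul_I]
    push_cast; ring
  -- continuity of the polar integrand
  have hcm : Continuous fun p : ℝ × ℝ => circleMap a p.1 p.2 := by
    unfold circleMap
    continuity
  have hKmem : ∀ p : ℝ × ℝ, p ∈ Set.Icc (0:ℝ) s ×ˢ Set.Icc (-Real.pi) Real.pi →
      circleMap a p.1 p.2 ∈ ball a r := by
    rintro ⟨x, y⟩ ⟨hx, _⟩
    have : dist (circleMap a x y) a = |x| := by
      simp [dist_eq_norm, circleMap_sub_center, norm_circleMap_zero]
    rw [mem_ball, this, _root_.abs_of_nonneg hx.1]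
    exact lt_of_le_of_lt hx.2 hsr
  have hcontK : ContinuousOn (fun p : ℝ × ℝ => p.1 * ‖f (circleMap a p.1 p.2)‖ ^ 2)
      (Set.Icc (0:ℝ) s ×ˢ Set.Icc (-Real.pi) Real.pi) := by
    apply (continuous_fst.continuousOn).mul
    exact ((hf.continuousOn.comp hcm.continuousOn hKmem).norm.pow 2)
  have hintK : IntegrableOn (fun p : ℝ × ℝ => p.1 * ‖f (circleMap a p.1 p.2)‖ ^ 2)
      (Set.Icc (0:ℝ) s ×ˢ Set.Icc (-Real.pi) Real.pi) :=
    hcontK.integrableOn_compact (isCompact_Icc.prod isCompact_Icc)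
  have hrect : IntegrableOn (fun p : ℝ × ℝ => p.1 * ‖f (circleMap a p.1 p.2)‖ ^ 2)
      (Set.Ioo (0:ℝ) s ×ˢ Set.Ioo (-Real.pi) Real.pi) :=
    hintK.mono_set (Set.prod_mono Set.Ioo_subset_Icc_self Set.Ioo_subset_Icc_self)
  -- step 1: translate
  have t1 : (∫ z in ball a s, ‖f z‖ ^ 2) = ∫ z in ball (0:ℂ) s, ‖f (a + z)‖ ^ 2 := by
    have mp : MeasurePreserving (fun z : ℂ => a + z) volume volume :=
      measurePreserving_add_left volume a
    have emb : MeasurableEmbedding (fun z : ℂ => a + z) :=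
      (MeasurableEquiv.addLeft a).measurableEmbedding
    have hpre : (fun z : ℂ => a + z) ⁻¹' ball a s = ball (0:ℂ) s := by
      ext z
      simp [mem_ball, dist_eq_norm]
    rw [← hpre]
    exact (mp.setIntegral_preimage_emb emb (fun z => ‖f z‖ ^ 2) (ball a s)).symm
  -- step 2: to an indicator integral on ℂ, then polar coordinates
  have t2 : (∫ z in ball (0:ℂ) s, ‖f (a + z)‖ ^ 2)
      = ∫ p in Set.Ioo (0:ℝ) s ×ˢ Set.Ioo (-Real.pi) Real.pi,
          p.1 * ‖f (circleMap a p.1 p.2)‖ ^ 2 := by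
    rw [← integral_indicator measurableSet_ball,
      ← Complex.integral_comp_polarCoord_symm (Set.indicator (ball (0:ℂ) s)
        (fun z => ‖f (a + z)‖ ^ 2))]
    rw [show polarCoord.target = Set.Ioi (0:ℝ) ×ˢ Set.Ioo (-Real.pi) Real.pi from rfl]
    have hrm : MeasurableSet (Set.Ioo (0:ℝ) s ×ˢ Set.Ioo (-Real.pi) Real.pi) := by
      measurability
    have step : ∫ p in Set.Ioi (0:ℝ) ×ˢ Set.Ioo (-Real.pi) Real.pi,
        p.1 • (ball (0:ℂ) s).indicator (fun z => ‖f (a + z)‖ ^ 2) (Complex.polarCoord.symm p)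
        = ∫ p in Set.Ioi (0:ℝ) ×ˢ Set.Ioo (-Real.pi) Real.pi,
          (Set.Ioo (0:ℝ) s ×ˢ Set.Ioo (-Real.pi) Real.pi).indicator
            (fun p => p.1 * ‖f (circleMap a p.1 p.2)‖ ^ 2) p := by
      apply setIntegral_congr_fun (by measurability)
      rintro ⟨x, y⟩ ⟨hx, hy⟩
      simp only [smul_eq_mul]
      have habs : ‖Complex.polarCoord.symm (x,y)‖ = |x| := by
        exact Complex.norm_polarCoord_symm (x,y)
      by_cases hxs : x < s
      · rw [Set.indicator_of_mem, Set.indicator_of_mem]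
        · have := hsymm (x, y)
          simp only at this ⊢
          rw [← this]
        · exact ⟨⟨hx, hxs⟩, hy⟩
        · rw [mem_ball_zero_iff, habs, abs_of_pos hx]
          exact hxs
      · rw [Set.indicator_of_notMem, Set.indicator_of_notMem, mul_zero]
        · rintro ⟨⟨_, h⟩, _⟩; exact hxs h
        · rw [mem_ball_zero_iff, habs, abs_of_pos hx]
          exact hxs
    rw [step, setIntegral_indicator hrm,
      Set.inter_eq_self_of_subset_right (Set.prod_mono Set.Ioo_subset_Ioi_self subset_rfl)]
  rw [t1, t2]
  have hrect' : Integrable (fun p : ℝ × ℝ => p.1 * ‖f (circleMap a p.1 p.2)‖ ^ 2)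
      ((volume.restrict (Set.Ioo (0:ℝ) s)).prod (volume.restrict (Set.Ioo (-Real.pi) Real.pi))) := by
    have h1 : Integrable (fun p : ℝ × ℝ => p.1 * ‖f (circleMap a p.1 p.2)‖ ^ 2)
        ((volume.prod volume).restrict (Set.Ioo (0:ℝ) s ×ˢ Set.Ioo (-Real.pi) Real.pi)) := by
      rw [← MeasureTheory.Measure.volume_eq_prod]; exact hrect
    rwa [← Measure.prod_restrict] at h1
  have hinner_int : IntegrableOn
      (fun x => ∫ y in Set.Ioo (-Real.pi) Real.pi, x * ‖f (circleMap a x y)‖ ^ 2)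
      (Set.Ioo (0:ℝ) s) := hrect'.integral_prod_left
  have hinner_bd : ∀ x ∈ Set.Ioo (0:ℝ) s,
      2 * Real.pi * x ≤ ∫ y in Set.Ioo (-Real.pi) Real.pi, x * ‖f (circleMap a x y)‖ ^ 2 := by
    rintro x ⟨hx0, hxs⟩
    have hper : Function.Periodic (fun θ => ‖f (circleMap a x θ)‖ ^ 2) (2 * Real.pi) := by
      intro θ
      simp [periodic_circleMap a x θ]
    have hval : (∫ y in Set.Ioo (-Real.pi) Real.pi, ‖f (circleMap a x y)‖ ^ 2)
        = ∫ θ in (0:ℝ)..(2*Real.pi), ‖f (circleMap a x θ)‖ ^ 2 := by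
      rw [← integral_Ioc_eq_integral_Ioo,
        ← intervalIntegral.integral_of_le (by linarith [Real.pi_pos] : -Real.pi ≤ Real.pi)]
      have := hper.intervalIntegral_add_eq (-Real.pi) 0
      rw [show -Real.pi + 2*Real.pi = Real.pi by ring, zero_add] at this
      exact this
    rw [integral_const_mul, hval]
    calc 2 * Real.pi * x = x * (2 * Real.pi) := by ring
      _ ≤ x * ∫ θ in (0:ℝ)..(2*Real.pi), ‖f (circleMap a x θ)‖ ^ 2 :=
        mul_le_mul_of_nonneg_left (circle_bound hf hfa hx0 (hxs.trans hsr)) hx0.le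
  calc Real.pi * s ^ 2 = ∫ x in Set.Ioo (0:ℝ) s, 2 * Real.pi * x := by
        rw [← integral_Ioc_eq_integral_Ioo, ← intervalIntegral.integral_of_le hs.le,
          intervalIntegral.integral_const_mul, integral_id]
        ring
    _ ≤ ∫ x in Set.Ioo (0:ℝ) s, ∫ y in Set.Ioo (-Real.pi) Real.pi,
          x * ‖f (circleMap a x y)‖ ^ 2 := by
        apply setIntegral_mono_on _ hinner_int measurableSet_Ioo hinner_bd
        exact (((continuous_const.mul continuous_id).continuousOn.integrableOn_compact
          isCompact_Icc).mono_set Set.Ioo_subset_Icc_self)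
    _ = ∫ p in Set.Ioo (0:ℝ) s ×ˢ Set.Ioo (-Real.pi) Real.pi,
          p.1 * ‖f (circleMap a p.1 p.2)‖ ^ 2 := by
        have hrect2 : IntegrableOn (fun p : ℝ × ℝ => p.1 * ‖f (circleMap a p.1 p.2)‖ ^ 2)
            (Set.Ioo (0:ℝ) s ×ˢ Set.Ioo (-Real.pi) Real.pi) (volume.prod volume) := by
          show Integrable _ ((volume.prod volume).restrict _)
          rw [← MeasureTheory.Measure.volume_eq_prod]; exact hrect
        rw [MeasureTheory.Measure.volume_eq_prod]
        exact (setIntegral_prod _ hrect2).symm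

lemma area_bound {f : ℂ → ℂ} {a : ℂ} {r : ℝ} (hr : 0 < r)
    (hf : DifferentiableOn ℂ f (ball a r)) (hfa : f a = 1)
    (hint : IntegrableOn (fun z => ‖f z‖ ^ 2) (ball a r)) :
    Real.pi * r ^ 2 ≤ ∫ z in ball a r, ‖f z‖ ^ 2 := by
  have hstep : ∀ s ∈ Set.Ioo (0:ℝ) r, Real.pi * s ^ 2 ≤ ∫ z in ball a r, ‖f z‖ ^ 2 := by
    rintro s ⟨hs0, hsr⟩
    refine (polar_ball_bound hf hfa hs0 hsr).trans ?_
    apply setIntegral_mono_set hint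
    · filter_upwards [ae_restrict_mem measurableSet_ball] with z _
      positivity
    · exact (ball_subset_ball hsr.le).eventuallyLE
  have htend : Filter.Tendsto (fun s : ℝ => Real.pi * s ^ 2) (nhdsWithin r (Set.Iio r))
      (nhds (Real.pi * r ^ 2)) :=
    ((continuous_const.mul (continuous_pow 2)).tendsto r).mono_left nhdsWithin_le_nhds
  refine le_of_tendsto htend ?_
  filter_upwards [Ioo_mem_nhdsLT_of_mem (Set.mem_Ioc.2 ⟨hr, le_refl r⟩)] with s hs
  exact hstep s hs

/-- `L_φ(a,r) → 1` as `r → 0⁺`, for every `a ∈ Ω`. -/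
theorem stmt7 (Ω : Set ℂ) (hΩo : IsOpen Ω) (hΩc : IsConnected Ω)
    (hΩb : Bornology.IsBounded Ω)
    (φ : ℂ → ℝ) (hφ : ContDiffOn ℝ ∞ φ Ω)
    (a : ℂ) (ha : a ∈ Ω) :
    Filter.Tendsto (fun r : ℝ => Lindex φ a r) (nhdsWithin 0 (Set.Ioi 0)) (nhds 1) := by
  rw [Metric.tendsto_nhdsWithin_nhds]
  intro ε hε
  set c := Real.exp (-φ a) with hc_def
  have hc : 0 < c := Real.exp_pos _
  set ε₀ : ℝ := min (ε / 2) (1 / 2) with hε₀_def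
  have hε₀ : 0 < ε₀ := lt_min (by linarith) (by norm_num)
  have hε₀half : ε₀ ≤ 1 / 2 := min_le_right _ _
  have hε₀ε : ε₀ < ε := (min_le_left _ _).trans_lt (by linarith)
  -- ball inside Ω
  obtain ⟨η, hη, hηΩ⟩ := Metric.isOpen_iff.1 hΩo a ha
  -- continuity of exp(-φ) at a
  have hφcont : ContinuousAt (fun z => Real.exp (-φ z)) a := by
    have h1 : ContinuousAt φ a := (hφ.continuousOn.continuousAt (hΩo.mem_nhds ha))
    exact Real.continuous_exp.continuousAt.comp h1.neg
  obtain ⟨δ₁, hδ₁, hδ₁bd⟩ := Metric.continuousAt_iff.1 hφcont (ε₀ * c) (by positivity)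
  refine ⟨min δ₁ η, lt_min hδ₁ hη, ?_⟩
  intro r hr hrd
  have hr0 : 0 < r := hr
  rw [Real.dist_eq, sub_zero, abs_of_pos hr0] at hrd
  have hrδ₁ : r < δ₁ := hrd.trans_le (min_le_left _ _)
  have hrη : r < η := hrd.trans_le (min_le_right _ _)
  have hballΩ : ball a r ⊆ Ω := (ball_subset_ball hrη.le).trans hηΩ
  -- bounds for exp(-φ) on ball a r
  have hbd : ∀ z ∈ ball a r, (1 - ε₀) * c ≤ Real.exp (-φ z) ∧ Real.exp (-φ z) ≤ (1 + ε₀) * c := by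
    intro z hz
    have : dist z a < δ₁ := (mem_ball.1 hz).trans hrδ₁
    have h2 := hδ₁bd this
    rw [Real.dist_eq] at h2
    have := abs_lt.1 h2
    constructor <;> nlinarith [this.1, this.2]
  have hm : 0 < (1 - ε₀) * c := by
    have h1 : (0:ℝ) < 1 - ε₀ := by linarith
    exact mul_pos h1 hc
  have hπr : 0 < Real.pi * r ^ 2 * c := by positivity
  -- the defining set
  set S := { t : ℝ | ∃ f : ℂ → ℂ, DifferentiableOn ℂ f (ball a r) ∧
    IntegrableOn (fun z => ‖f z‖ ^ 2 * Real.exp (-φ z)) (ball a r) volume ∧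
    f a = 1 ∧
    t = (∫ z in ball a r, ‖f z‖ ^ 2 * Real.exp (-φ z)) /
        (Real.pi * r ^ 2 * Real.exp (-φ a)) } with hS_def
  have hLdef : Lindex φ a r = sInf S := rfl
  -- integrability of exp(-φ) on the ball
  have hexp_meas : AEStronglyMeasurable (fun z => Real.exp (-φ z)) (volume.restrict (ball a r)) := by
    have : ContinuousOn (fun z => Real.exp (-φ z)) (ball a r) :=
      Real.continuous_exp.comp_continuousOn ((hφ.continuousOn.mono hballΩ).neg)
    exact this.aestronglyMeasurable measurableSet_ball
  have hexp_int : IntegrableOn (fun z => Real.exp (-φ z)) (ball a r) := by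
    refine Integrable.mono' (integrableOn_const measure_ball_lt_top.ne :
      IntegrableOn (fun _ => (1 + ε₀) * c) (ball a r) volume) hexp_meas ?_
    filter_upwards [ae_restrict_mem measurableSet_ball] with z hz
    rw [Real.norm_eq_abs, abs_of_pos (Real.exp_pos _)]
    exact (hbd z hz).2
  -- the constant-one witness
  have hwit : ((∫ z in ball a r, Real.exp (-φ z)) / (Real.pi * r ^ 2 * c)) ∈ S := by
    refine ⟨fun _ => 1, differentiableOn_const 1, by simpa using hexp_int, rfl, by simp [hc_def]⟩
  -- lower bound for every element of S
  have hlb : ∀ t ∈ S, 1 - ε₀ ≤ t := by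
    rintro t ⟨f, hdf, hfint, hfa, rfl⟩
    have hf2meas : AEStronglyMeasurable (fun z => ‖f z‖ ^ 2) (volume.restrict (ball a r)) :=
      (hdf.continuousOn.norm.pow 2).aestronglyMeasurable measurableSet_ball
    have hf2int : IntegrableOn (fun z => ‖f z‖ ^ 2) (ball a r) := by
      refine Integrable.mono' (hfint.const_mul ((1 - ε₀) * c)⁻¹) hf2meas ?_
      filter_upwards [ae_restrict_mem measurableSet_ball] with z hz
      rw [Real.norm_eq_abs, _root_.abs_of_nonneg (by positivity : (0:ℝ) ≤ ‖f z‖ ^ 2)]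
      rw [le_inv_mul_iff₀ hm]
      calc (1 - ε₀) * c * ‖f z‖ ^ 2 = ‖f z‖ ^ 2 * ((1 - ε₀) * c) := by ring
        _ ≤ ‖f z‖ ^ 2 * Real.exp (-φ z) :=
          mul_le_mul_of_nonneg_left (hbd z hz).1 (by positivity)
    have harea := area_bound hr0 hdf hfa hf2int
    have hmono : (1 - ε₀) * c * (Real.pi * r ^ 2)
        ≤ ∫ z in ball a r, ‖f z‖ ^ 2 * Real.exp (-φ z) := by
      calc (1 - ε₀) * c * (Real.pi * r ^ 2)
          ≤ (1 - ε₀) * c * ∫ z in ball a r, ‖f z‖ ^ 2 := by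
            rw [mul_le_mul_iff_right₀ hm]; linarith [harea]
        _ = ∫ z in ball a r, (1 - ε₀) * c * ‖f z‖ ^ 2 := (integral_const_mul _ _).symm
        _ ≤ ∫ z in ball a r, ‖f z‖ ^ 2 * Real.exp (-φ z) := by
            apply setIntegral_mono_on (hf2int.const_mul _) hfint measurableSet_ball
            intro z hz
            calc (1 - ε₀) * c * ‖f z‖ ^ 2 = ‖f z‖ ^ 2 * ((1 - ε₀) * c) := by ring
              _ ≤ ‖f z‖ ^ 2 * Real.exp (-φ z) :=
                mul_le_mul_of_nonneg_left (hbd z hz).1 (by positivity)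
    rw [le_div_iff₀ hπr]
    calc (1 - ε₀) * (Real.pi * r ^ 2 * c) = (1 - ε₀) * c * (Real.pi * r ^ 2) := by ring
      _ ≤ _ := hmono
  -- upper bound for the witness
  have hub : (∫ z in ball a r, Real.exp (-φ z)) / (Real.pi * r ^ 2 * c) ≤ 1 + ε₀ := by
    rw [div_le_iff₀ hπr]
    have hvol : (volume (ball a r)).toReal = r ^ 2 * Real.pi := by
      rw [Complex.volume_ball, ENNReal.toReal_mul, ENNReal.toReal_pow,
        ENNReal.toReal_ofReal hr0.le, ENNReal.coe_toReal, NNReal.coe_real_pi]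
    calc (∫ z in ball a r, Real.exp (-φ z))
        ≤ ∫ _z in ball a r, (1 + ε₀) * c := by
          apply setIntegral_mono_on hexp_int (integrableOn_const measure_ball_lt_top.ne)
            measurableSet_ball
          exact fun z hz => (hbd z hz).2
      _ = (1 + ε₀) * (Real.pi * r ^ 2 * c) := by
          rw [setIntegral_const, smul_eq_mul, measureReal_def, hvol]; ring
  -- conclude
  have hL1 : 1 - ε₀ ≤ Lindex φ a r := by
    rw [hLdef]
    exact le_csInf ⟨_, hwit⟩ hlb
  have hL2 : Lindex φ a r ≤ 1 + ε₀ := by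
    rw [hLdef]
    exact (csInf_le ⟨1 - ε₀, hlb⟩ hwit).trans hub
  rw [Real.dist_eq]
  rw [abs_lt]
  constructor <;> linarith
end

section
/- Let Ω ⊂ ℂ be a bounded domain and h a smooth Hermitian metric on the trivial rank-N holomorphic vector bundle E = Ω × ℂ^N. Then for every a ∈ Ω and every ξ ∈ ℂ^N \ {0}, lim_{r → 0⁺} L_h(a,r,ξ) = 1. -/
open MeasureTheory Metric Complex
open scoped ContDiff ComplexOrder

/-- The (real-valued) Hermitian pairing `⟨A v, v⟩ = ∑ v̄ᵢ (A v)ᵢ` determined by a Hermitian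
matrix `A`; for a metric matrix `h(z)` this is `|v|²_{h(z)}`. -/
noncomputable def pairing {N : ℕ} (A : Matrix (Fin N) (Fin N) ℂ) (v : Fin N → ℂ) : ℝ :=
  (dotProduct (star v) (A.mulVec v)).re

/-- The `L²`-extension index `L_h(a,r,ξ)` of a Hermitian metric `h` on the trivial bundle
`Ω × ℂ^N`. -/
noncomputable def LindexV {N : ℕ} (h : ℂ → Matrix (Fin N) (Fin N) ℂ) (a : ℂ) (r : ℝ)
    (ξ : Fin N → ℂ) : ℝ :=
  sInf { t : ℝ | ∃ s : ℂ → (Fin N → ℂ), DifferentiableOn ℂ s (ball a r) ∧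
    IntegrableOn (fun z => pairing (h z) (s z)) (ball a r) volume ∧
    s a = ξ ∧
    t = (∫ z in ball a r, pairing (h z) (s z)) / (Real.pi * r ^ 2 * pairing (h a) ξ) }

/-- The Wirtinger derivative `∂f/∂z = (1/2)(∂f/∂x − i ∂f/∂y)`. -/
noncomputable def wdz (f : ℂ → ℂ) (a : ℂ) : ℂ :=
  (1 / 2) * (fderiv ℝ f a 1 - Complex.I * fderiv ℝ f a Complex.I)

/-- The Wirtinger derivative `∂f/∂z̄ = (1/2)(∂f/∂x + i ∂f/∂y)`. -/
noncomputable def wdzbar (f : ℂ → ℂ) (a : ℂ) : ℂ :=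
  (1 / 2) * (fderiv ℝ f a 1 + Complex.I * fderiv ℝ f a Complex.I)

/-- Entrywise Wirtinger derivative `∂_z h` of a matrix-valued function. -/
noncomputable def matDz {N : ℕ} (h : ℂ → Matrix (Fin N) (Fin N) ℂ) (z : ℂ) :
    Matrix (Fin N) (Fin N) ℂ :=
  Matrix.of fun i j => wdz (fun w => h w i j) z

/-- The Chern curvature matrix `θ_h = −∂_{z̄}(h⁻¹ ∂_z h)` of the Hermitian metric `h`. -/
noncomputable def chern {N : ℕ} (h : ℂ → Matrix (Fin N) (Fin N) ℂ) (a : ℂ) :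
    Matrix (Fin N) (Fin N) ℂ :=
  Matrix.of fun i j => - wdzbar (fun z => ((h z)⁻¹ * matDz h z) i j) a


section Auxiliary

open Set
open scoped MatrixOrder

lemma circle_mvp {f : ℂ → ℂ} {a : ℂ} {R ρ : ℝ} (hρ : 0 < ρ) (hρR : ρ < R)
    (hf : DifferentiableOn ℂ f (ball a R)) :
    ∫ θ in (0)..(2 * Real.pi), f (circleMap a ρ θ) = (2 * Real.pi) * f a := by
  have hcl : closure (ball a ρ) = closedBall a ρ := closure_ball a hρ.ne'
  have hd : DiffContOnCl ℂ f (ball a ρ) :=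
    ⟨hf.mono (ball_subset_ball hρR.le), by
      rw [hcl]; exact hf.continuousOn.mono (closedBall_subset_ball hρR)⟩
  have key := hd.circleIntegral_sub_inv_smul (mem_ball_self hρ)
  rw [circleIntegral] at key
  have : ∀ θ : ℝ, (deriv (circleMap a ρ) θ) • ((circleMap a ρ θ - a)⁻¹ • f (circleMap a ρ θ))
      = Complex.I * f (circleMap a ρ θ) := by
    intro θ
    rw [deriv_circleMap, circleMap_sub_center, smul_eq_mul, smul_eq_mul]
    have h0 : circleMap 0 ρ θ ≠ 0 := by
      simpa using circleMap_ne_center (c := 0) (R := ρ) hρ.ne' (θ := θ)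
    field_simp
  simp only [this] at key
  rw [intervalIntegral.integral_const_mul] at key
  have hI : (Complex.I : ℂ) ≠ 0 := Complex.I_ne_zero
  have := key
  -- key : I * ∫ = (2 * π * I) • f a
  rw [smul_eq_mul] at this
  refine mul_left_cancel₀ hI ?_
  rw [this]; push_cast; ring

lemma circleMap_mem_ball' {a : ℂ} {R ρ : ℝ} (hρ : 0 < ρ) (hρR : ρ < R) (θ : ℝ) :
    circleMap a ρ θ ∈ ball a R := by
  simp only [mem_ball, Complex.dist_eq, circleMap_sub_center]
  calc ‖circleMap 0 ρ θ‖ = |ρ| := norm_circleMap_zero ρ θ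
  _ < R := by rw [abs_of_pos hρ]; exact hρR

lemma circle_sq {f : ℂ → ℂ} {a : ℂ} {R ρ : ℝ} (hρ : 0 < ρ) (hρR : ρ < R)
    (hf : DifferentiableOn ℂ f (ball a R)) :
    2 * Real.pi * Complex.normSq (f a)
      ≤ ∫ θ in (0)..(2 * Real.pi), Complex.normSq (f (circleMap a ρ θ)) := by
  have hc : Continuous fun θ => f (circleMap a ρ θ) :=
    hf.continuousOn.comp_continuous (continuous_circleMap a ρ)
      (circleMap_mem_ball' hρ hρR)
  set g : ℝ → ℝ := fun θ => ‖f (circleMap a ρ θ)‖ with hg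
  have hgc : Continuous g := hc.norm
  have h2π : (0:ℝ) < 2 * Real.pi := by positivity
  set M : ℝ := ∫ θ in (0)..(2 * Real.pi), g θ with hM
  have hgi : IntervalIntegrable g volume 0 (2 * Real.pi) := hgc.intervalIntegrable _ _
  have hg2i : IntervalIntegrable (fun θ => g θ ^ 2) volume 0 (2 * Real.pi) :=
    (hgc.pow 2).intervalIntegrable _ _
  have h1 : 2 * Real.pi * ‖f a‖ ≤ M := by
    have := intervalIntegral.norm_integral_le_integral_norm
      (f := fun θ => f (circleMap a ρ θ)) (μ := volume) h2π.le
    rw [circle_mvp hρ hρR hf] at this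
    simpa [norm_mul, abs_of_pos Real.pi_pos] using this
  have hMnn : 0 ≤ M := intervalIntegral.integral_nonneg h2π.le (fun u _ => norm_nonneg _)
  set m : ℝ := M / (2 * Real.pi) with hm
  have h0 : (0:ℝ) ≤ ∫ θ in (0)..(2 * Real.pi), (g θ - m) ^ 2 :=
    intervalIntegral.integral_nonneg h2π.le (fun u _ => sq_nonneg _)
  have heq : ∫ θ in (0)..(2 * Real.pi), (g θ - m) ^ 2
      = (∫ θ in (0)..(2 * Real.pi), g θ ^ 2) - 2 * m * M + m ^ 2 * (2 * Real.pi) := by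
    have : (fun θ => (g θ - m) ^ 2) = fun θ => (g θ ^ 2 - 2 * m * g θ) + m ^ 2 := by
      funext θ; ring
    rw [this, intervalIntegral.integral_add (hg2i.sub (hgi.const_mul (2*m)))
          intervalIntegrable_const,
        intervalIntegral.integral_sub hg2i (hgi.const_mul (2*m)),
        intervalIntegral.integral_const_mul, intervalIntegral.integral_const]
    rw [← hM]; ring_nf
  have hm2 : m * (2 * Real.pi) = M := div_mul_cancel₀ M h2π.ne'
  have h0' : m * M ≤ ∫ θ in (0)..(2 * Real.pi), g θ ^ 2 := by
    rw [heq] at h0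
    have hmm : m ^ 2 * (2 * Real.pi) = m * M := by rw [pow_two, mul_assoc, hm2]
    linarith
  have h2 : M ^ 2 ≤ 2 * Real.pi * ∫ θ in (0)..(2 * Real.pi), g θ ^ 2 := by
    calc M ^ 2 = 2 * Real.pi * (m * M) := by rw [← hm2]; ring
    _ ≤ 2 * Real.pi * ∫ θ in (0)..(2 * Real.pi), g θ ^ 2 :=
        mul_le_mul_of_nonneg_left h0' h2π.le
  have hnsq : ∀ z : ℂ, Complex.normSq z = ‖z‖ ^ 2 := fun z => by
    rw [Complex.normSq_eq_norm_sq]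
  have final : 2 * Real.pi * Complex.normSq (f a) ≤ ∫ θ in (0)..(2 * Real.pi), g θ ^ 2 := by
    have hsq : (2 * Real.pi * ‖f a‖) ^ 2 ≤ M ^ 2 := pow_le_pow_left₀ (by positivity) h1 2
    have hch : 2 * Real.pi * (2 * Real.pi * ‖f a‖ ^ 2) ≤
        2 * Real.pi * ∫ θ in (0)..(2 * Real.pi), g θ ^ 2 := by
      calc 2 * Real.pi * (2 * Real.pi * ‖f a‖ ^ 2) = (2 * Real.pi * ‖f a‖) ^ 2 := by ring
      _ ≤ M ^ 2 := hsq
      _ ≤ _ := h2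
    rw [hnsq]
    exact (mul_le_mul_iff_right₀ h2π).mp hch
  calc 2 * Real.pi * Complex.normSq (f a) ≤ ∫ θ in (0)..(2 * Real.pi), g θ ^ 2 := final
  _ = ∫ θ in (0)..(2 * Real.pi), Complex.normSq (f (circleMap a ρ θ)) := by
      apply intervalIntegral.integral_congr; intro θ _
      show ‖f (circleMap a ρ θ)‖ ^ 2 = Complex.normSq (f (circleMap a ρ θ))
      rw [hnsq]

lemma polar_symm_circle (a : ℂ) (x y : ℝ) :
    a + Complex.polarCoord.symm (x, y) = circleMap a x y := by
  rw [Complex.polarCoord_symm_apply, circleMap, Complex.exp_mul_I]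
  push_cast
  ring

lemma smv_disc {f : ℂ → ℂ} {a : ℂ} {R ρ : ℝ} (hρ : 0 < ρ) (hρR : ρ < R)
    (hf : DifferentiableOn ℂ f (ball a R)) :
    Real.pi * ρ ^ 2 * Complex.normSq (f a) ≤ ∫ z in ball a ρ, Complex.normSq (f z) := by
  have hπ := Real.pi_pos
  set g : ℂ → ℝ := Set.indicator (ball (0:ℂ) ρ) (fun z => Complex.normSq (f (a + z))) with hgdef
  -- step 1 : translate
  have step1 : ∫ z in ball a ρ, Complex.normSq (f z) = ∫ z, g z := by
    rw [← integral_indicator measurableSet_ball]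
    rw [← integral_add_left_eq_self (μ := volume)
      (f := Set.indicator (ball a ρ) fun z => Complex.normSq (f z)) a]
    congr 1
    funext z
    by_cases hz : z ∈ ball (0:ℂ) ρ
    · have : a + z ∈ ball a ρ := by
        simpa [mem_ball, dist_eq_norm] using mem_ball_zero_iff.mp hz
      rw [Set.indicator_of_mem this, hgdef, Set.indicator_of_mem hz]
    · have : a + z ∉ ball a ρ := by
        intro hmem; apply hz
        rw [mem_ball_zero_iff]
        simpa [mem_ball, dist_eq_norm] using hmem
      rw [Set.indicator_of_notMem this, hgdef, Set.indicator_of_notMem hz]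
  -- step 2 : polar coordinates
  have step2 : (∫ p in polarCoord.target, p.1 • g (Complex.polarCoord.symm p)) = ∫ z, g z :=
    Complex.integral_comp_polarCoord_symm g
  -- step 3 : shrink domain
  set T : Set (ℝ × ℝ) := Ioo 0 ρ ×ˢ Ioo (-Real.pi) Real.pi with hT
  set φ : ℝ × ℝ → ℝ := fun p => p.1 * Complex.normSq (f (a + Complex.polarCoord.symm p))
    with hφdef
  have step3 : (∫ p in polarCoord.target, p.1 • g (Complex.polarCoord.symm p))
      = ∫ p in T, φ p := by
    rw [← integral_indicator (polarCoord.open_target.measurableSet),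
        ← integral_indicator ((isOpen_Ioo.prod isOpen_Ioo).measurableSet)]
    congr 1
    funext p
    by_cases hp : p ∈ polarCoord.target
    · rw [Set.indicator_of_mem hp]
      have hp1 : 0 < p.1 := (Set.mem_prod.mp hp).1
      by_cases hlt : p.1 < ρ
      · have hball : Complex.polarCoord.symm p ∈ ball (0:ℂ) ρ := by
          rw [mem_ball_zero_iff, Complex.norm_polarCoord_symm,
            abs_of_pos hp1]
          exact hlt
        have hpT : p ∈ T := by
          refine Set.mem_prod.mpr ⟨⟨hp1, hlt⟩, (Set.mem_prod.mp hp).2⟩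
        rw [Set.indicator_of_mem hpT, hgdef, Set.indicator_of_mem hball, hφdef]
        simp [smul_eq_mul]
      · have hball : Complex.polarCoord.symm p ∉ ball (0:ℂ) ρ := by
          rw [mem_ball_zero_iff, Complex.norm_polarCoord_symm,
            abs_of_pos hp1]
          exact hlt
        have hpT : p ∉ T := fun hmem => hlt (Set.mem_prod.mp hmem).1.2
        rw [Set.indicator_of_notMem hpT, hgdef, Set.indicator_of_notMem hball]
        simp
    · have hpT : p ∉ T := by
        intro hmem; apply hp
        exact Set.mem_prod.mpr ⟨Set.mem_Ioi.mpr (Set.mem_prod.mp hmem).1.1,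
          (Set.mem_prod.mp hmem).2⟩
      rw [Set.indicator_of_notMem hp, Set.indicator_of_notMem hpT]
  -- integrability of φ on T
  have hsymm_cont : Continuous fun p : ℝ × ℝ => a + Complex.polarCoord.symm p := by
    have : (fun p : ℝ × ℝ => a + Complex.polarCoord.symm p)
        = fun p : ℝ × ℝ => a + (p.1 : ℂ) * (Real.cos p.2 + Real.sin p.2 * Complex.I) := by
      funext p; rw [Complex.polarCoord_symm_apply]
    rw [this]; fun_prop
  have hmaps : ∀ p : ℝ × ℝ, p ∈ Icc 0 ρ ×ˢ Icc (-Real.pi) Real.pi →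
      a + Complex.polarCoord.symm p ∈ ball a R := by
    intro p hp
    rw [mem_ball, dist_eq_norm, add_sub_cancel_left,
      Complex.norm_polarCoord_symm]
    rcases (Set.mem_prod.mp hp).1 with ⟨h1, h2⟩
    rw [_root_.abs_of_nonneg h1]
    exact lt_of_le_of_lt h2 hρR
  have hφcont : ContinuousOn φ (Icc 0 ρ ×ˢ Icc (-Real.pi) Real.pi) := by
    apply ContinuousOn.mul continuous_fst.continuousOn
    exact Complex.continuous_normSq.comp_continuousOn
      (hf.continuousOn.comp hsymm_cont.continuousOn hmaps)
  have hφint : IntegrableOn φ T := by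
    apply IntegrableOn.mono_set
      (hφcont.integrableOn_compact (isCompact_Icc.prod isCompact_Icc))
    exact Set.prod_mono Ioo_subset_Icc_self Ioo_subset_Icc_self
  -- step 4 : Fubini
  have step4 : ∫ p in T, φ p
      = ∫ x in Ioo 0 ρ, ∫ y in Ioo (-Real.pi) Real.pi, φ (x, y) := by
    rw [hT, MeasureTheory.Measure.volume_eq_prod] at hφint ⊢
    exact setIntegral_prod φ hφint
  -- inner bound
  have inner_bound : ∀ x ∈ Ioo 0 ρ,
      x * (2 * Real.pi * Complex.normSq (f a))
        ≤ ∫ y in Ioo (-Real.pi) Real.pi, φ (x, y) := by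
    intro x hx
    have hx0 : 0 < x := hx.1
    have hxR : x < R := lt_trans hx.2 hρR
    have hcirc : ∀ y : ℝ, φ (x, y) = x * Complex.normSq (f (circleMap a x y)) := by
      intro y; rw [hφdef]; simp only; rw [polar_symm_circle]
    have hper : Function.Periodic (fun y => Complex.normSq (f (circleMap a x y)))
        (2 * Real.pi) := fun y => by
      show Complex.normSq (f (circleMap a x (y + 2 * Real.pi))) = _
      rw [(periodic_circleMap a x) y]
    have heq2 : ∫ y in Ioo (-Real.pi) Real.pi, Complex.normSq (f (circleMap a x y))
        = ∫ y in (0)..(2 * Real.pi), Complex.normSq (f (circleMap a x y)) := by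
      rw [← integral_Ioc_eq_integral_Ioo,
        ← intervalIntegral.integral_of_le (by linarith : -Real.pi ≤ Real.pi)]
      have := hper.intervalIntegral_add_eq (-Real.pi) 0
      rw [show -Real.pi + 2 * Real.pi = Real.pi by ring] at this
      rw [this, zero_add]
    have hbd := circle_sq hx0 hxR hf
    calc x * (2 * Real.pi * Complex.normSq (f a))
        ≤ x * ∫ y in (0)..(2 * Real.pi), Complex.normSq (f (circleMap a x y)) :=
          mul_le_mul_of_nonneg_left hbd hx0.le
      _ = ∫ y in Ioo (-Real.pi) Real.pi, φ (x, y) := by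
          rw [← heq2]
          rw [← MeasureTheory.integral_const_mul]
          apply setIntegral_congr_fun measurableSet_Ioo
          intro y _
          show x * Complex.normSq (f (circleMap a x y)) = φ (x, y)
          rw [hcirc]
  -- outer bound
  have hmarg : IntegrableOn (fun x => ∫ y in Ioo (-Real.pi) Real.pi, φ (x, y)) (Ioo 0 ρ) := by
    rw [hT, MeasureTheory.Measure.volume_eq_prod, IntegrableOn,
      ← Measure.prod_restrict] at hφint
    exact hφint.integral_prod_left
  have houter : ∫ x in Ioo 0 ρ, x * (2 * Real.pi * Complex.normSq (f a))
      ≤ ∫ x in Ioo 0 ρ, ∫ y in Ioo (-Real.pi) Real.pi, φ (x, y) := by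
    apply setIntegral_mono_on
    · exact ((continuous_id.mul continuous_const).continuousOn.integrableOn_compact
        isCompact_Icc).mono_set Ioo_subset_Icc_self
    · exact hmarg
    · exact measurableSet_Ioo
    · exact inner_bound
  have hval : ∫ x in Ioo 0 ρ, x * (2 * Real.pi * Complex.normSq (f a))
      = Real.pi * ρ ^ 2 * Complex.normSq (f a) := by
    rw [← integral_Ioc_eq_integral_Ioo,
      ← intervalIntegral.integral_of_le hρ.le]
    rw [intervalIntegral.integral_mul_const, integral_id]
    ring
  rw [step1, ← step2, step3, step4]
  rw [← hval]
  exact houter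

lemma smv_scalar {f : ℂ → ℂ} {a : ℂ} {R : ℝ} (hR : 0 < R)
    (hf : DifferentiableOn ℂ f (ball a R))
    (hi : IntegrableOn (fun z => Complex.normSq (f z)) (ball a R) volume) :
    Real.pi * R ^ 2 * Complex.normSq (f a) ≤ ∫ z in ball a R, Complex.normSq (f z) := by
  have key : ∀ ρ ∈ Set.Ioo 0 R,
      Real.pi * ρ ^ 2 * Complex.normSq (f a) ≤ ∫ z in ball a R, Complex.normSq (f z) := by
    intro ρ hρ
    refine le_trans (smv_disc hρ.1 hρ.2 hf) ?_
    apply setIntegral_mono_set hi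
    · filter_upwards [self_mem_ae_restrict measurableSet_ball] with z _
      exact Complex.normSq_nonneg _
    · exact HasSubset.Subset.eventuallyLE (ball_subset_ball hρ.2.le)
  have hlim : Filter.Tendsto (fun ρ : ℝ => Real.pi * ρ ^ 2 * Complex.normSq (f a))
      (nhdsWithin R (Set.Ioo 0 R)) (nhds (Real.pi * R ^ 2 * Complex.normSq (f a))) := by
    apply Filter.Tendsto.mono_left ?_ nhdsWithin_le_nhds
    exact (((continuous_const.mul (continuous_pow 2)).mul continuous_const).tendsto R)
  have hne : (nhdsWithin R (Set.Ioo 0 R)).NeBot := by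
    apply mem_closure_iff_nhdsWithin_neBot.mp
    rw [closure_Ioo hR.ne]
    exact ⟨hR.le, le_refl R⟩
  exact le_of_tendsto hlim (Filter.eventually_iff_exists_mem.mpr
    ⟨Set.Ioo 0 R, self_mem_nhdsWithin, key⟩)

lemma pairing_nonneg {N : ℕ} {A : Matrix (Fin N) (Fin N) ℂ} (hA : A.PosSemidef)
    (v : Fin N → ℂ) : 0 ≤ pairing A v := by
  have := hA.re_dotProduct_nonneg (x := v)
  simpa [pairing] using this

lemma pairing_pos {N : ℕ} {A : Matrix (Fin N) (Fin N) ℂ} (hA : A.PosDef)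
    {v : Fin N → ℂ} (hv : v ≠ 0) : 0 < pairing A v := by
  have := hA.re_dotProduct_pos hv
  simpa [pairing] using this

lemma pairing_sub {N : ℕ} (M M' : Matrix (Fin N) (Fin N) ℂ) (v : Fin N → ℂ) :
    pairing M v - pairing M' v = pairing (M - M') v := by
  simp only [pairing, Matrix.sub_mulVec, dotProduct_sub, Complex.sub_re]

lemma pairing_abs_le {N : ℕ} (M : Matrix (Fin N) (Fin N) ℂ) (v : Fin N → ℂ) :
    |pairing M v| ≤ (∑ i, ∑ j, ‖M i j‖) * ‖v‖ ^ 2 := by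
  have hv : ∀ k : Fin N, ‖v k‖ ≤ ‖v‖ := by
    intro k
    exact norm_le_pi_norm v k
  have hmv : ∀ i, ‖M.mulVec v i‖ ≤ ∑ j, ‖M i j‖ * ‖v‖ := by
    intro i
    have hrfl : M.mulVec v i = ∑ j, M i j * v j := rfl
    rw [hrfl]
    refine le_trans (norm_sum_le _ _) (Finset.sum_le_sum fun j _ => ?_)
    rw [norm_mul]
    exact mul_le_mul_of_nonneg_left (hv j) (norm_nonneg _)
  have h1 : |pairing M v| ≤ ‖dotProduct (star v) (M.mulVec v)‖ :=
    Complex.abs_re_le_norm _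
  have h2 : ‖dotProduct (star v) (M.mulVec v)‖
      ≤ ∑ i, ‖star v i‖ * ‖M.mulVec v i‖ := by
    have hrfl : dotProduct (star v) (M.mulVec v) = ∑ i, star v i * M.mulVec v i := rfl
    rw [hrfl]
    refine le_trans (norm_sum_le _ _) (Finset.sum_le_sum fun i _ => ?_)
    rw [norm_mul]
  have h3 : ∀ i : Fin N, ‖star v i‖ * ‖M.mulVec v i‖
      ≤ (∑ j, ‖M i j‖) * ‖v‖ ^ 2 := by
    intro i
    have hsv : ‖star v i‖ ≤ ‖v‖ := by
      rw [Pi.star_apply]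
      rw [show ‖star (v i)‖ = ‖v i‖ by
        rw [Complex.star_def, Complex.norm_conj]]
      exact hv i
    have hbd := hmv i
    have hsum_nonneg : (0:ℝ) ≤ ∑ j, ‖M i j‖ * ‖v‖ :=
      Finset.sum_nonneg fun j _ => mul_nonneg (norm_nonneg _) (norm_nonneg _)
    calc ‖star v i‖ * ‖M.mulVec v i‖
        ≤ ‖v‖ * ∑ j, ‖M i j‖ * ‖v‖ :=
          mul_le_mul hsv hbd (norm_nonneg _) (norm_nonneg _)
      _ = (∑ j, ‖M i j‖) * ‖v‖ ^ 2 := by rw [← Finset.sum_mul]; ring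
  calc |pairing M v| ≤ ∑ i, ‖star v i‖ * ‖M.mulVec v i‖ :=
        h1.trans h2
    _ ≤ ∑ i, (∑ j, ‖M i j‖) * ‖v‖ ^ 2 := Finset.sum_le_sum fun i _ => h3 i
    _ = (∑ i, ∑ j, ‖M i j‖) * ‖v‖ ^ 2 := by rw [Finset.sum_mul]

lemma pairing_smul {N : ℕ} (A : Matrix (Fin N) (Fin N) ℂ) (t : ℝ) (v : Fin N → ℂ) :
    pairing A ((t : ℂ) • v) = t ^ 2 * pairing A v := by
  simp only [pairing, Matrix.mulVec_smul, star_smul, smul_dotProduct,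
    dotProduct_smul, smul_eq_mul, star_trivial]
  rw [Complex.star_def, Complex.conj_ofReal]
  rw [show ((t:ℂ) * ((t:ℂ) * dotProduct (star v) (A.mulVec v)))
    = ((t^2 : ℝ) : ℂ) * dotProduct (star v) (A.mulVec v) by push_cast; ring]
  rw [Complex.re_ofReal_mul]

lemma pairing_coercive {N : ℕ} {A : Matrix (Fin N) (Fin N) ℂ} (hA : A.PosDef) (hN : 0 < N) :
    ∃ c : ℝ, 0 < c ∧ ∀ v : Fin N → ℂ, c * ‖v‖ ^ 2 ≤ pairing A v := by
  have hsph : IsCompact (sphere (0 : Fin N → ℂ) 1) := isCompact_sphere _ _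
  haveI : Nonempty (Fin N) := ⟨⟨0, hN⟩⟩
  haveI : Nontrivial (Fin N → ℂ) := ⟨0, Function.const _ 1, by
    intro hcontra
    have := congrFun hcontra (Classical.arbitrary (Fin N))
    simp [Function.const] at this⟩
  have hne : (sphere (0 : Fin N → ℂ) 1).Nonempty := by
    exact NormedSpace.sphere_nonempty.mpr zero_le_one
  have hcont : ContinuousOn (fun v => pairing A v) (sphere (0 : Fin N → ℂ) 1) := by
    apply Continuous.continuousOn
    unfold pairing
    continuity
  obtain ⟨v₀, hv₀mem, hv₀min⟩ := hsph.exists_isMinOn hne hcont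
  have hv₀ne : v₀ ≠ 0 := by
    intro h0
    rw [h0] at hv₀mem
    simp at hv₀mem
  refine ⟨pairing A v₀, pairing_pos hA hv₀ne, ?_⟩
  intro v
  by_cases hv : v = 0
  · simp [hv, pairing]
  · have hnv : (0:ℝ) < ‖v‖ := norm_pos_iff.mpr hv
    have hu : (‖v‖⁻¹ : ℂ) • v ∈ sphere (0 : Fin N → ℂ) 1 := by
      simp [norm_smul, hnv.ne']
    have hmin : pairing A v₀ ≤ pairing A (((‖v‖ : ℂ))⁻¹ • v) := hv₀min hu
    have key : pairing A (((‖v‖ : ℂ))⁻¹ • v) = (‖v‖⁻¹) ^ 2 * pairing A v := by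
      rw [← Complex.ofReal_inv]
      exact pairing_smul A ‖v‖⁻¹ v
    rw [key] at hmin
    have := mul_le_mul_of_nonneg_left hmin (le_of_lt (by positivity : (0:ℝ) < ‖v‖ ^ 2))
    calc pairing A v₀ * ‖v‖ ^ 2 = ‖v‖^2 * pairing A v₀ := by ring
    _ ≤ ‖v‖ ^ 2 * ((‖v‖⁻¹) ^ 2 * pairing A v) := this
    _ = pairing A v := by field_simp

lemma pairing_expand {N : ℕ} (A : Matrix (Fin N) (Fin N) ℂ) (v : Fin N → ℂ) :
    pairing A v = ∑ i, ∑ j, (star (v i) * (A i j * v j)).re := by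
  rw [pairing]
  have hrfl : dotProduct (star v) (A.mulVec v)
      = ∑ i, star (v i) * ∑ j, A i j * v j := rfl
  rw [hrfl]
  rw [Complex.re_sum]
  apply Finset.sum_congr rfl
  intro i _
  rw [Finset.mul_sum, Complex.re_sum]

lemma pairing_continuousOn_vec {N : ℕ} (A : Matrix (Fin N) (Fin N) ℂ)
    {s : ℂ → Fin N → ℂ} {U : Set ℂ} (hs : ContinuousOn s U) :
    ContinuousOn (fun z => pairing A (s z)) U := by
  have : (fun z => pairing A (s z)) = fun z => ∑ i, ∑ j, (star (s z i) * (A i j * s z j)).re := by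
    funext z; rw [pairing_expand]
  rw [this]
  apply continuousOn_finset_sum
  intro i _
  apply continuousOn_finset_sum
  intro j _
  apply Complex.continuous_re.comp_continuousOn
  have hsi : ContinuousOn (fun z => s z i) U :=
    (continuous_apply i).comp_continuousOn hs
  have hsj : ContinuousOn (fun z => s z j) U :=
    (continuous_apply j).comp_continuousOn hs
  exact (continuous_star.comp_continuousOn hsi).mul (continuousOn_const.mul hsj)

lemma pairing_continuousOn_mat {N : ℕ} {h : ℂ → Matrix (Fin N) (Fin N) ℂ}
    {U : Set ℂ} (hsm : ∀ i j, ContinuousOn (fun z => h z i j) U) (v : Fin N → ℂ) :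
    ContinuousOn (fun z => pairing (h z) v) U := by
  have : (fun z => pairing (h z) v) = fun z => ∑ i, ∑ j, (star (v i) * (h z i j * v j)).re := by
    funext z; rw [pairing_expand]
  rw [this]
  apply continuousOn_finset_sum
  intro i _
  apply continuousOn_finset_sum
  intro j _
  apply Complex.continuous_re.comp_continuousOn
  exact continuousOn_const.mul ((hsm i j).mul continuousOn_const)

lemma pairing_eq_sum_normSq {N : ℕ} {A : Matrix (Fin N) (Fin N) ℂ} (hA : A.PosSemidef)
    (v : Fin N → ℂ) :
    pairing A v = ∑ i, Complex.normSq ((CFC.sqrt A).mulVec v i) := by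
  set B := CFC.sqrt A with hB
  have hBh : B.conjTranspose = B := (Matrix.nonneg_iff_posSemidef.mp (CFC.sqrt_nonneg A)).1
  have hfac : A = B * B := (CFC.sqrt_mul_sqrt_self A hA.nonneg).symm
  have : dotProduct (star v) (A.mulVec v)
      = dotProduct (star (B.mulVec v)) (B.mulVec v) := by
    rw [hfac, ← Matrix.mulVec_mulVec, Matrix.dotProduct_mulVec, Matrix.star_mulVec, hBh]
  rw [pairing, this, dotProduct]
  rw [Complex.re_sum]
  apply Finset.sum_congr rfl
  intro i _
  simp only [Pi.star_apply, Complex.star_def]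
  rw [← Complex.normSq_eq_conj_mul_self]
  exact Complex.ofReal_re _
lemma smv_vec {N : ℕ} {A : Matrix (Fin N) (Fin N) ℂ} (hA : A.PosSemidef)
    {s : ℂ → Fin N → ℂ} {a : ℂ} {R : ℝ} (hR : 0 < R)
    (hs : DifferentiableOn ℂ s (ball a R))
    (hi : IntegrableOn (fun z => pairing A (s z)) (ball a R) volume) :
    Real.pi * R ^ 2 * pairing A (s a) ≤ ∫ z in ball a R, pairing A (s z) := by
  set B := CFC.sqrt A with hB
  have hrew : ∀ z, pairing A (s z) = ∑ i, Complex.normSq (B.mulVec (s z) i) :=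
    fun z => pairing_eq_sum_normSq hA (s z)
  -- each component is holomorphic
  have hcomp : ∀ i : Fin N, DifferentiableOn ℂ (fun z => B.mulVec (s z) i) (ball a R) := by
    intro i
    have : (fun z => B.mulVec (s z) i) = fun z => ∑ j, B i j * s z j := by
      funext z; rfl
    rw [this]
    apply DifferentiableOn.fun_sum
    intro j _
    exact (differentiableOn_pi.mp hs j).const_mul _
  -- integrability of each component
  have hconts : ∀ i, ContinuousOn (fun z => Complex.normSq (B.mulVec (s z) i)) (ball a R) :=
    fun i => Complex.continuous_normSq.comp_continuousOn (hcomp i).continuousOn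
  have hinti : ∀ i : Fin N,
      IntegrableOn (fun z => Complex.normSq (B.mulVec (s z) i)) (ball a R) volume := by
    intro i
    apply Integrable.mono' hi ((hconts i).aestronglyMeasurable measurableSet_ball)
    filter_upwards [self_mem_ae_restrict measurableSet_ball] with z hz
    rw [Real.norm_eq_abs, _root_.abs_of_nonneg (Complex.normSq_nonneg _), hrew]
    exact Finset.single_le_sum (f := fun i => Complex.normSq (B.mulVec (s z) i))
      (fun j _ => Complex.normSq_nonneg _) (Finset.mem_univ i)
  calc Real.pi * R ^ 2 * pairing A (s a)
      = ∑ i, Real.pi * R ^ 2 * Complex.normSq (B.mulVec (s a) i) := by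
        rw [hrew, Finset.mul_sum]
    _ ≤ ∑ i, ∫ z in ball a R, Complex.normSq (B.mulVec (s z) i) := by
        apply Finset.sum_le_sum
        intro i _
        exact smv_scalar hR (hcomp i) (hinti i)
    _ = ∫ z in ball a R, ∑ i, Complex.normSq (B.mulVec (s z) i) :=
        (integral_finset_sum _ (fun i _ => hinti i)).symm
    _ = ∫ z in ball a R, pairing A (s z) := by
        apply setIntegral_congr_fun measurableSet_ball
        intro z _
        show ∑ i, Complex.normSq (B.mulVec (s z) i) = pairing A (s z)
        rw [hrew]

end Auxiliary

/-- `L_h(a,r,ξ) → 1` as `r → 0⁺`, for every `a ∈ Ω` and `ξ ∈ ℂ^N \ {0}`. -/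
theorem stmt10 (N : ℕ) (Ω : Set ℂ) (hΩo : IsOpen Ω) (hΩc : IsConnected Ω)
    (hΩb : Bornology.IsBounded Ω)
    (h : ℂ → Matrix (Fin N) (Fin N) ℂ)
    (hsm : ∀ i j : Fin N, ContDiffOn ℝ ∞ (fun z => h z i j) Ω)
    (hpd : ∀ z ∈ Ω, (h z).PosDef)
    (a : ℂ) (ha : a ∈ Ω) (ξ : Fin N → ℂ) (hξ : ξ ≠ 0) :
    Filter.Tendsto (fun r : ℝ => LindexV h a r ξ) (nhdsWithin 0 (Set.Ioi 0)) (nhds 1) := by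
  -- N is positive
  rcases Nat.eq_zero_or_pos N with hN0 | hN
  · exfalso
    apply hξ
    funext i
    exact absurd i.isLt (by omega)
  have hpda := hpd a ha
  have hPpos : 0 < pairing (h a) ξ := pairing_pos hpda hξ
  obtain ⟨c, hc, hcoer⟩ := pairing_coercive hpda hN
  have hcont : ∀ i j, ContinuousOn (fun z => h z i j) Ω := fun i j => (hsm i j).continuousOn
  rw [Metric.tendsto_nhdsWithin_nhds]
  intro ε hε
  set ε₁ : ℝ := min (ε / 2) (1 / 2) with hε₁def
  have hε₁pos : 0 < ε₁ := lt_min (by linarith) (by norm_num)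
  have hε₁lt : ε₁ < 1 := lt_of_le_of_lt (min_le_right _ _) (by norm_num)
  have hε₁ε : ε₁ < ε := lt_of_le_of_lt (min_le_left _ _) (by linarith)
  -- the deviation function
  set D : ℂ → ℝ := fun z => ∑ i, ∑ j, ‖h z i j - h a i j‖ with hDdef
  have hDcont : ContinuousOn D Ω := by
    apply continuousOn_finset_sum
    intro i _
    apply continuousOn_finset_sum
    intro j _
    exact continuous_norm.comp_continuousOn ((hcont i j).sub continuousOn_const)
  have hDa : D a = 0 := by simp [hDdef]
  -- find r₀
  have hDat : ContinuousAt D a := hDcont.continuousAt (hΩo.mem_nhds ha)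
  have hev : ∀ᶠ z in nhds a, D z < ε₁ * c := by
    apply hDat.eventually_lt_const
    rw [hDa]; positivity
  obtain ⟨r₀, hr₀pos, hr₀sub⟩ := Metric.mem_nhds_iff.mp
    (Filter.inter_mem (hΩo.mem_nhds ha) hev)
  refine ⟨r₀, hr₀pos, ?_⟩
  intro r hr hrd
  have hrpos : 0 < r := hr
  have hrlt : r < r₀ := by
    rw [Real.dist_eq, sub_zero, abs_of_pos hrpos] at hrd
    exact hrd
  have hball_sub : ball a r ⊆ Ω := fun z hz =>
    (hr₀sub (lt_trans (mem_ball.mp hz) hrlt : dist z a < r₀)).1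
  have hDlt : ∀ z ∈ ball a r, D z < ε₁ * c := fun z hz =>
    (hr₀sub (lt_trans (mem_ball.mp hz) hrlt : dist z a < r₀)).2
  -- comparison of quadratic forms on ball a r
  have hcompare : ∀ z ∈ ball a r, ∀ v : Fin N → ℂ,
      (1 - ε₁) * pairing (h a) v ≤ pairing (h z) v ∧
      pairing (h z) v ≤ (1 + ε₁) * pairing (h a) v := by
    intro z hz v
    have hdiff : |pairing (h z) v - pairing (h a) v| ≤ ε₁ * pairing (h a) v := by
      rw [pairing_sub]
      refine le_trans (pairing_abs_le _ _) ?_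
      have hDz : (∑ i, ∑ j, ‖(h z - h a) i j‖) = D z := by
        simp [hDdef, Matrix.sub_apply]
      rw [hDz]
      calc D z * ‖v‖ ^ 2 ≤ (ε₁ * c) * ‖v‖ ^ 2 :=
            mul_le_mul_of_nonneg_right (hDlt z hz).le (by positivity)
        _ = ε₁ * (c * ‖v‖ ^ 2) := by ring
        _ ≤ ε₁ * pairing (h a) v := mul_le_mul_of_nonneg_left (hcoer v) hε₁pos.le
    have h1 := abs_le.mp hdiff
    constructor <;> linarith [h1.1, h1.2]
  -- the set S
  set S := { t : ℝ | ∃ s : ℂ → (Fin N → ℂ), DifferentiableOn ℂ s (ball a r) ∧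
    IntegrableOn (fun z => pairing (h z) (s z)) (ball a r) volume ∧
    s a = ξ ∧
    t = (∫ z in ball a r, pairing (h z) (s z)) / (Real.pi * r ^ 2 * pairing (h a) ξ) }
    with hSdef
  have hden : 0 < Real.pi * r ^ 2 * pairing (h a) ξ := by
    have := Real.pi_pos; positivity
  -- lower bound for all elements of S
  have hlb : ∀ t ∈ S, 1 - ε₁ ≤ t := by
    rintro t ⟨s, hs, hi, hsa, ht⟩
    have hspos : ∀ z ∈ ball a r, 0 ≤ pairing (h z) (s z) := fun z hz =>
      pairing_nonneg (hpd z (hball_sub hz)).posSemidef _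
    -- integrability of pairing (h a) (s z)
    have hi2 : IntegrableOn (fun z => pairing (h a) (s z)) (ball a r) volume := by
      apply Integrable.mono' (hi.div_const (1 - ε₁))
      · exact (pairing_continuousOn_vec (h a) hs.continuousOn).aestronglyMeasurable
          measurableSet_ball
      · filter_upwards [self_mem_ae_restrict measurableSet_ball] with z hz
        rw [Real.norm_eq_abs, _root_.abs_of_nonneg (pairing_nonneg hpda.posSemidef _)]
        rw [le_div_iff₀ (by linarith : (0:ℝ) < 1 - ε₁)]
        calc pairing (h a) (s z) * (1 - ε₁) = (1 - ε₁) * pairing (h a) (s z) := by ring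
          _ ≤ pairing (h z) (s z) := (hcompare z hz (s z)).1
    have hsmv := smv_vec hpda.posSemidef hrpos hs hi2
    rw [hsa] at hsmv
    have h1ε : (0:ℝ) < 1 - ε₁ := by linarith
    have hcomp_int : ∫ z in ball a r, pairing (h a) (s z)
        ≤ (∫ z in ball a r, pairing (h z) (s z)) / (1 - ε₁) := by
      rw [div_eq_mul_inv, ← MeasureTheory.integral_mul_const]
      apply setIntegral_mono_on hi2 (hi.mul_const _) measurableSet_ball
      intro z hz
      rw [← div_eq_mul_inv, le_div_iff₀ h1ε]
      have := (hcompare z hz (s z)).1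
      linarith
    have hnum : (1 - ε₁) * (Real.pi * r ^ 2 * pairing (h a) ξ)
        ≤ ∫ z in ball a r, pairing (h z) (s z) := by
      have h2 := hsmv.trans hcomp_int
      rw [le_div_iff₀ h1ε] at h2
      linarith
    rw [ht, le_div_iff₀ hden]
    linarith
  -- upper bound : constant section
  have hconst_int : IntegrableOn (fun z => pairing (h z) ξ) (ball a r) volume := by
    constructor
    · exact (((pairing_continuousOn_mat hcont ξ)).mono hball_sub).aestronglyMeasurable
        measurableSet_ball
    · apply HasFiniteIntegral.restrict_of_bounded
        (C := (1 + ε₁) * pairing (h a) ξ) measure_ball_lt_top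
      filter_upwards [self_mem_ae_restrict measurableSet_ball] with z hz
      rw [Real.norm_eq_abs,
        _root_.abs_of_nonneg (pairing_nonneg (hpd z (hball_sub hz)).posSemidef _)]
      exact (hcompare z hz ξ).2
  set t₀ : ℝ := (∫ z in ball a r, pairing (h z) ξ) / (Real.pi * r ^ 2 * pairing (h a) ξ)
    with ht₀def
  have ht₀S : t₀ ∈ S := ⟨fun _ => ξ, differentiableOn_const ξ, hconst_int, rfl, rfl⟩
  have hvol : (volume (ball a r)).toReal = Real.pi * r ^ 2 := by
    rw [Complex.volume_ball, ENNReal.toReal_mul, ENNReal.toReal_pow,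
      ENNReal.toReal_ofReal hrpos.le, ENNReal.coe_toReal, NNReal.coe_real_pi]
    ring
  have hub : t₀ ≤ 1 + ε₁ := by
    rw [ht₀def, div_le_iff₀ hden]
    calc ∫ z in ball a r, pairing (h z) ξ
        ≤ ∫ _z in ball a r, (1 + ε₁) * pairing (h a) ξ :=
          setIntegral_mono_on hconst_int
            (integrableOn_const measure_ball_lt_top.ne) measurableSet_ball
            (fun z hz => (hcompare z hz ξ).2)
      _ = (volume (ball a r)).toReal * ((1 + ε₁) * pairing (h a) ξ) := by
          rw [setIntegral_const, smul_eq_mul]; rfl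
      _ = (1 + ε₁) * (Real.pi * r ^ 2 * pairing (h a) ξ) := by rw [hvol]; ring
  have hLdef : LindexV h a r ξ = sInf S := rfl
  have hSne : S.Nonempty := ⟨t₀, ht₀S⟩
  have hLlow : 1 - ε₁ ≤ LindexV h a r ξ := by
    rw [hLdef]; exact le_csInf hSne hlb
  have hLhigh : LindexV h a r ξ ≤ 1 + ε₁ := by
    rw [hLdef]
    exact le_trans (csInf_le ⟨1 - ε₁, hlb⟩ ht₀S) hub
  rw [Real.dist_eq, abs_lt]
  constructor <;> linarith
end

section
/- Let Ω ⊂ ℂ be a bounded domain, φ a smooth real-valued function on Ω, a ∈ Ω a fixed point, and g(a) > 0 a positive real number. Then the following are equivalent: (1) for every ε ∈ (0, g(a)) there exists r_ε ∈ (0, δ(a)) such that L_φ(a,r) ≤ e^{−((g(a)−ε)/2)·r²} for all r ∈ (0, r_ε); (2) √−1 ∂∂̄φ(a) ≥ g(a)·ω, i.e. ∂²φ/∂z∂z̄(a) ≥ g(a). -/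
open MeasureTheory Metric Complex
open scoped ContDiff

open Set
open scoped Real

section Taylor

variable {Ω : Set ℂ} {φ : ℂ → ℝ} {a : ℂ}

lemma hasFDerivAt_phi (hΩo : IsOpen Ω) (hφ : ContDiffOn ℝ ∞ φ Ω) {z : ℂ} (hz : z ∈ Ω) :
    HasFDerivAt φ (fderiv ℝ φ z) z := by
  have h1 : (1 : WithTop ℕ∞) ≤ ∞ := by exact_mod_cast (le_top : (1:ℕ∞) ≤ ⊤)
  exact ((hφ.differentiableOn (by simp)).differentiableAt (hΩo.mem_nhds hz)).hasFDerivAt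

lemma hasFDerivAt_dphi (hΩo : IsOpen Ω) (hφ : ContDiffOn ℝ ∞ φ Ω) (ha : a ∈ Ω) :
    HasFDerivAt (fderiv ℝ φ) (fderiv ℝ (fderiv ℝ φ) a) a := by
  have h1 : (1 : WithTop ℕ∞) + 1 ≤ ∞ := WithTop.coe_le_coe.2 le_top
  have h2 : ContDiffOn ℝ 1 (fderiv ℝ φ) Ω := hφ.fderiv_of_isOpen hΩo h1
  have h3 : (1 : WithTop ℕ∞) ≤ 1 := le_rfl
  exact ((h2.differentiableOn one_ne_zero).differentiableAt (hΩo.mem_nhds ha)).hasFDerivAt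

lemma B_symm (hΩo : IsOpen Ω) (hφ : ContDiffOn ℝ ∞ φ Ω) (ha : a ∈ Ω) (v w : ℂ) :
    fderiv ℝ (fderiv ℝ φ) a v w = fderiv ℝ (fderiv ℝ φ) a w v := by
  refine second_derivative_symmetric_of_eventually (f := φ) ?_ (hasFDerivAt_dphi hΩo hφ ha) v w
  filter_upwards [hΩo.mem_nhds ha] with y hy using hasFDerivAt_phi hΩo hφ hy

lemma taylor2 (hΩo : IsOpen Ω) (hφ : ContDiffOn ℝ ∞ φ Ω) (ha : a ∈ Ω)
    {ε : ℝ} (hε : 0 < ε) :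
    ∃ ρ : ℝ, 0 < ρ ∧ ball a ρ ⊆ Ω ∧ ∀ z ∈ ball a ρ,
      |φ z - φ a - fderiv ℝ φ a (z - a)
        - (1/2) * fderiv ℝ (fderiv ℝ φ) a (z - a) (z - a)| ≤ ε * ‖z - a‖^2 := by
  set D1 := fderiv ℝ φ a with hD1def
  set B := fderiv ℝ (fderiv ℝ φ) a with hBdef
  have hB := hasFDerivAt_dphi hΩo hφ ha
  have hbd : ∀ᶠ y in nhds a, ‖fderiv ℝ φ y - D1 - B (y - a)‖ ≤ ε * ‖y - a‖ := by
    have := hB.isLittleO.def hε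
    filter_upwards [this] with y hy using by simpa [sub_sub] using hy
  obtain ⟨ρ, hρpos, hρ⟩ := Metric.mem_nhds_iff.1 (Filter.inter_mem (hΩo.mem_nhds ha) hbd)
  refine ⟨ρ, hρpos, fun z hz => (hρ hz).1, fun z hz => ?_⟩
  set F : ℂ → ℝ := fun y => φ y - D1 (y - a) - (1/2) * B (y - a) (y - a) with hFdef
  have hderiv : ∀ y ∈ ball a ρ,
      HasFDerivAt F (fderiv ℝ φ y - D1 - B (y - a)) y := by
    intro y hy
    have h1 : HasFDerivAt (fun w : ℂ => w - a) (ContinuousLinearMap.id ℝ ℂ) y :=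
      (hasFDerivAt_id y).sub_const a
    have hc : HasFDerivAt (fun w : ℂ => B (w - a)) (B.comp (ContinuousLinearMap.id ℝ ℂ)) y :=
      B.hasFDerivAt.comp y h1
    have hq : HasFDerivAt (fun w : ℂ => B (w - a) (w - a))
        ((B (y - a)).comp (ContinuousLinearMap.id ℝ ℂ)
          + (B.comp (ContinuousLinearMap.id ℝ ℂ)).flip (y - a)) y := hc.clm_apply h1
    have hlin : HasFDerivAt (fun w : ℂ => D1 (w - a)) (D1.comp (ContinuousLinearMap.id ℝ ℂ)) y :=
      D1.hasFDerivAt.comp y h1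
    have hφy : HasFDerivAt φ (fderiv ℝ φ y) y := hasFDerivAt_phi hΩo hφ ((hρ hy).1)
    have hF : HasFDerivAt F
        (fderiv ℝ φ y - D1.comp (ContinuousLinearMap.id ℝ ℂ)
          - (1/2 : ℝ) • ((B (y - a)).comp (ContinuousLinearMap.id ℝ ℂ)
            + (B.comp (ContinuousLinearMap.id ℝ ℂ)).flip (y - a))) y :=
      (hφy.sub hlin).sub (hq.const_mul (1/2))
    have heq : (fderiv ℝ φ y - D1.comp (ContinuousLinearMap.id ℝ ℂ)
          - (1/2 : ℝ) • ((B (y - a)).comp (ContinuousLinearMap.id ℝ ℂ)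
            + (B.comp (ContinuousLinearMap.id ℝ ℂ)).flip (y - a)))
        = fderiv ℝ φ y - D1 - B (y - a) := by
      apply ContinuousLinearMap.ext
      intro v
      have hs : B v (y - a) = B (y - a) v := B_symm hΩo hφ ha v (y - a)
      simp only [ContinuousLinearMap.sub_apply, ContinuousLinearMap.smul_apply,
        ContinuousLinearMap.add_apply, ContinuousLinearMap.comp_apply,
        ContinuousLinearMap.coe_id', id_eq, ContinuousLinearMap.flip_apply, smul_eq_mul]
      rw [hs]; ring
    rw [heq] at hF
    exact hF
  have hconv : Convex ℝ (closedBall a ‖z - a‖) := convex_closedBall a _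
  have hsub : closedBall a ‖z - a‖ ⊆ ball a ρ := by
    intro y hy
    have : dist y a ≤ ‖z - a‖ := mem_closedBall.1 hy
    have hz' : ‖z - a‖ < ρ := by simpa [dist_eq_norm] using mem_ball.1 hz
    exact mem_ball.2 (lt_of_le_of_lt this hz')
  have hbound : ∀ y ∈ closedBall a ‖z - a‖,
      ‖fderiv ℝ φ y - D1 - B (y - a)‖ ≤ ε * ‖z - a‖ := by
    intro y hy
    have h1 : ‖fderiv ℝ φ y - D1 - B (y - a)‖ ≤ ε * ‖y - a‖ := (hρ (hsub hy)).2
    have h2 : ‖y - a‖ ≤ ‖z - a‖ := by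
      have := mem_closedBall.1 hy; simpa [dist_eq_norm] using this
    exact h1.trans (by nlinarith [hε.le])
  have key := Convex.norm_image_sub_le_of_norm_hasFDerivWithin_le
    (f' := fun y => fderiv ℝ φ y - D1 - B (y - a))
    (fun y hy => ((hderiv y (hsub hy)).hasFDerivWithinAt)) hbound hconv (mem_closedBall_self (norm_nonneg _)) (mem_closedBall.2 (le_of_eq (dist_eq_norm z a)))
  have hFa : F a = φ a := by simp [hFdef]
  have : ‖F z - F a‖ ≤ ε * ‖z - a‖ * ‖z - a‖ := key
  rw [hFa] at this
  calc |φ z - φ a - D1 (z - a) - (1/2) * B (z - a) (z - a)|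
      = ‖F z - φ a‖ := by rw [Real.norm_eq_abs]; congr 1; simp only [hFdef]; ring
    _ ≤ ε * ‖z - a‖ * ‖z - a‖ := this
    _ = ε * ‖z - a‖^2 := by ring

end Taylor




section Alg
variable {Ω : Set ℂ} {φ : ℂ → ℝ} {a : ℂ}

lemma dzdzbar_eq_B (hB : HasFDerivAt (fderiv ℝ φ) (fderiv ℝ (fderiv ℝ φ) a) a) :
    dzdzbar φ a = (fderiv ℝ (fderiv ℝ φ) a 1 1 + fderiv ℝ (fderiv ℝ φ) a I I)/4 := by
  set B := fderiv ℝ (fderiv ℝ φ) a with hBdef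
  have h1 : ∀ v : ℂ, HasFDerivAt (fun z => fderiv ℝ φ z v)
      ((fderiv ℝ φ a).comp (0 : ℂ →L[ℝ] ℂ) + B.flip v) a :=
    fun v => hB.clm_apply (hasFDerivAt_const v a)
  have h2 : ∀ v : ℂ, fderiv ℝ (fun z => fderiv ℝ φ z v) a = B.flip v := by
    intro v
    rw [(h1 v).fderiv]
    simp
  rw [dzdzbar, h2, h2]
  simp [ContinuousLinearMap.flip_apply]
  ring

lemma key_identity (D1 : ℂ →L[ℝ] ℝ) (B : ℂ →L[ℝ] ℂ →L[ℝ] ℝ) (hs : B 1 I = B I 1) (w : ℂ) :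
    D1 w + (1/2) * B w w =
      (((((D1 1 : ℝ)):ℂ) - (((D1 I : ℝ)):ℂ)*I) * w
        + (((((B 1 1 - B I I)/4 : ℝ)):ℂ) - ((((B 1 I)/2 : ℝ)):ℂ)*I) * w^2).re
      + ((B 1 1 + B I I)/4) * ‖w‖^2 := by
  have hw : w = (w.re : ℝ) • (1:ℂ) + (w.im : ℝ) • I := by
    simp [Complex.real_smul, Complex.re_add_im]
  have hD : D1 w = w.re * D1 1 + w.im * D1 I := by
    conv_lhs => rw [hw]
    rw [map_add, D1.map_smul, D1.map_smul]; simp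
  have hBw : B w w = w.re * (w.re * B 1 1 + w.im * B 1 I)
      + w.im * (w.re * B I 1 + w.im * B I I) := by
    conv_lhs => rw [hw]
    simp only [map_add, _root_.map_smul, ContinuousLinearMap.add_apply,
      ContinuousLinearMap.smul_apply, smul_eq_mul]
    ring
  have hnorm : ‖w‖^2 = w.re^2 + w.im^2 := by
    rw [Complex.sq_norm, Complex.normSq_apply]; ring
  rw [hD, hBw, hnorm, hs]
  simp [Complex.add_re, Complex.mul_re, Complex.sub_re, Complex.sub_im, Complex.ofReal_re,
    Complex.ofReal_im, Complex.mul_im, Complex.I_re, Complex.I_im, pow_two]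
  ring

end Alg



lemma csymm_eq (p : ℝ × ℝ) :
    Complex.polarCoord.symm p = p.1 * Complex.exp (p.2 * Complex.I) := by
  rw [Complex.polarCoord_symm_apply, Complex.exp_mul_I]
  simp [← Complex.ofReal_cos, ← Complex.ofReal_sin]

lemma add_csymm_eq_circleMap (a : ℂ) (p : ℝ × ℝ) :
    a + Complex.polarCoord.symm p = circleMap a p.1 p.2 := by
  rw [csymm_eq, circleMap]

lemma polar_ball {u : ℂ → ℝ} {a : ℂ} {r : ℝ} (hr : 0 < r)
    (hu : ContinuousOn u (closedBall a r)) :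
    IntegrableOn
        (fun s => s * ∫ θ in Ioo (-π) π, u (a + Complex.polarCoord.symm (s, θ)))
        (Ioo 0 r) volume ∧
    (∫ z in ball a r, u z)
      = ∫ s in Ioo (0:ℝ) r, s * ∫ θ in Ioo (-π) π, u (a + Complex.polarCoord.symm (s, θ)) := by
  -- the function on polar rectangle
  set A : Set (ℝ × ℝ) := Ioo (0:ℝ) r ×ˢ Ioo (-π) π with hA
  set v : ℝ × ℝ → ℝ := fun p => p.1 • u (a + Complex.polarCoord.symm p) with hv
  have hπ : (0:ℝ) < π := Real.pi_pos
  -- continuity of v on the compact rectangle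
  have hsymm_cont : Continuous (fun p : ℝ × ℝ => a + Complex.polarCoord.symm p) := by
    have : Continuous fun p : ℝ × ℝ => a + ↑p.1 * Complex.exp (↑p.2 * Complex.I) := by
      continuity
    convert this using 2 with p
    rw [csymm_eq]
  have hmaps : MapsTo (fun p : ℝ × ℝ => a + Complex.polarCoord.symm p)
      (Icc (0:ℝ) r ×ˢ Icc (-π) π) (closedBall a r) := by
    intro p hp
    have : dist (a + Complex.polarCoord.symm p) a = |p.1| := by
      rw [dist_eq_norm, add_sub_cancel_left, Complex.norm_polarCoord_symm]
    rw [mem_closedBall, this, _root_.abs_of_nonneg hp.1.1]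
    exact hp.1.2
  have hvK : ContinuousOn v (Icc (0:ℝ) r ×ˢ Icc (-π) π) := by
    apply ContinuousOn.smul continuous_fst.continuousOn
    exact hu.comp hsymm_cont.continuousOn hmaps
  have hVint : IntegrableOn v A volume := by
    refine (hvK.integrableOn_compact (isCompact_Icc.prod isCompact_Icc)).mono_set ?_
    exact Set.prod_mono Ioo_subset_Icc_self Ioo_subset_Icc_self
  -- step: translation
  have step0 : (∫ z in ball a r, u z) = ∫ z in ball (0:ℂ) r, u (a + z) := by
    have h1 : MeasurePreserving (fun z : ℂ => a + z) volume volume :=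
      measurePreserving_add_left volume a
    have h2 : MeasurableEmbedding (fun z : ℂ => a + z) :=
      (MeasurableEquiv.addLeft a).measurableEmbedding
    have h3 : (fun z : ℂ => a + z) ⁻¹' (ball a r) = ball (0:ℂ) r := by
      ext z
      simp [mem_ball, dist_eq_norm, add_sub_cancel_left]
    rw [← h1.setIntegral_preimage_emb h2 u (ball a r), h3]
  -- step: indicator + polar change of variables
  have step1 : (∫ z in ball (0:ℂ) r, u (a + z))
      = ∫ p in polarCoord.target, p.1 • (ball (0:ℂ) r).indicator (fun z => u (a + z))
          (Complex.polarCoord.symm p) := by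
    rw [← integral_indicator measurableSet_ball]
    rw [Complex.integral_comp_polarCoord_symm]
  -- step: rewrite as integral over A
  have step2 : (∫ p in polarCoord.target, p.1 • (ball (0:ℂ) r).indicator (fun z => u (a + z))
          (Complex.polarCoord.symm p)) = ∫ p in A, v p := by
    have htm : MeasurableSet polarCoord.target := polarCoord.open_target.measurableSet
    have hpt : ∀ p ∈ polarCoord.target,
        p.1 • (ball (0:ℂ) r).indicator (fun z => u (a + z)) (Complex.polarCoord.symm p)
          = A.indicator v p := by
      rintro ⟨s, θ⟩ hp
      have hs : 0 < s := hp.1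
      have hθ : θ ∈ Ioo (-π) π := hp.2
      have habs : ‖Complex.polarCoord.symm (s, θ)‖ = s := by
        rw [Complex.norm_polarCoord_symm, abs_of_pos hs]
      by_cases hsr : s < r
      · rw [Set.indicator_of_mem, Set.indicator_of_mem]
        · exact ⟨⟨hs, hsr⟩, hθ⟩
        · rw [mem_ball_zero_iff, habs]; exact hsr
      · rw [Set.indicator_of_notMem, Set.indicator_of_notMem, smul_zero]
        · rintro ⟨⟨_, h⟩, _⟩; exact hsr h
        · rw [mem_ball_zero_iff, habs]; exact hsr
    rw [setIntegral_congr_fun htm hpt]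
    rw [setIntegral_indicator (hA ▸ (measurableSet_Ioo.prod measurableSet_Ioo) : MeasurableSet A)]
    congr 1
    rw [Set.inter_eq_right.2]
    rintro ⟨s, θ⟩ ⟨hs, hθ⟩
    exact ⟨hs.1, hθ⟩
  -- Fubini
  have hprodmeas : (volume : Measure (ℝ × ℝ)) = (volume : Measure ℝ).prod volume :=
    Measure.volume_eq_prod _ _
  have hVint' : Integrable v
      (((volume : Measure ℝ).restrict (Ioo 0 r)).prod ((volume : Measure ℝ).restrict (Ioo (-π) π))) := by
    rw [Measure.prod_restrict, ← hprodmeas]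
    exact hVint
  have step3 : (∫ p in A, v p)
      = ∫ s in Ioo (0:ℝ) r, ∫ θ in Ioo (-π) π, v (s, θ) := by
    rw [hA, hprodmeas, ← Measure.prod_restrict]
    exact MeasureTheory.integral_prod v hVint'
  have houter : IntegrableOn
      (fun s => s * ∫ θ in Ioo (-π) π, u (a + Complex.polarCoord.symm (s, θ))) (Ioo 0 r) volume := by
    have := hVint'.integral_prod_left
    refine this.congr (Filter.Eventually.of_forall fun s => ?_)
    simp only [hv]
    rw [integral_smul, smul_eq_mul]
  constructor
  · exact houter
  · rw [step0, step1, step2, step3]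
    refine setIntegral_congr_fun measurableSet_Ioo (fun s hs => ?_)
    simp only [hv]
    rw [integral_smul, smul_eq_mul]



lemma add_csymm_eq_circleMap' (a : ℂ) (p : ℝ × ℝ) :
    a + Complex.polarCoord.symm p = circleMap a p.1 p.2 := by
  rw [Complex.polarCoord_symm_apply, circleMap, Complex.exp_mul_I]
  simp [← Complex.ofReal_cos, ← Complex.ofReal_sin]

lemma theta_to_circle (u : ℂ → ℝ) (a : ℂ) (s : ℝ) :
    (∫ θ in Ioo (-π) π, u (a + Complex.polarCoord.symm (s, θ)))
      = ∫ θ in (0:ℝ)..(2*π), u (circleMap a s θ) := by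
  have h1 : ∀ θ : ℝ, u (a + Complex.polarCoord.symm (s, θ)) = u (circleMap a s θ) :=
    fun θ => by rw [add_csymm_eq_circleMap' a (s, θ)]
  simp_rw [h1]
  rw [← MeasureTheory.integral_Ioc_eq_integral_Ioo,
      ← intervalIntegral.integral_of_le (by linarith [Real.pi_pos] : -π ≤ π)]
  have hper : Function.Periodic (fun θ => u (circleMap a s θ)) (2*π) :=
    (periodic_circleMap a s).comp u
  have h := hper.intervalIntegral_add_eq (-π) 0
  rw [(by ring : -π + 2*π = π), zero_add] at h
  exact h

lemma circle_mean (g : ℂ → ℂ) {a : ℂ} {R s : ℝ} (hg : DifferentiableOn ℂ g (ball a R))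
    (hs : 0 < s) (hsR : s < R) :
    (∫ θ in (0:ℝ)..(2*π), g (circleMap a s θ)) = ((2*π : ℝ) : ℂ) * g a := by
  have hsub : closedBall a s ⊆ ball a R := closedBall_subset_ball hsR
  have hc : ContinuousOn g (closedBall a s) := hg.continuousOn.mono hsub
  have hd : ∀ z ∈ ball a s \ (∅ : Set ℂ), DifferentiableAt ℂ g z := fun z hz =>
    hg.differentiableAt (isOpen_ball.mem_nhds ((ball_subset_ball hsR.le) hz.1))
  have key := circleIntegral_sub_center_inv_smul_of_differentiable_on_off_countable hs
      countable_empty hc hd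
  rw [circleIntegral] at key
  have hint : ∀ θ : ℝ, (deriv (circleMap a s) θ) •
      ((circleMap a s θ - a)⁻¹ • g (circleMap a s θ)) = I * g (circleMap a s θ) := by
    intro θ
    rw [deriv_circleMap, circleMap_sub_center, smul_eq_mul, smul_eq_mul]
    have hne : circleMap 0 s θ ≠ 0 := by
      simpa using circleMap_ne_center (c := (0:ℂ)) hs.ne' (θ := θ)
    field_simp
  simp_rw [hint] at key
  rw [intervalIntegral.integral_const_mul] at key
  have hI : (2 * ↑π * I : ℂ) • g a = I * (((2*π:ℝ):ℂ) * g a) := by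
    rw [smul_eq_mul]; push_cast; ring
  rw [hI] at key
  exact mul_left_cancel₀ I_ne_zero key

lemma circle_submean (g : ℂ → ℂ) {a : ℂ} {R s : ℝ} (hg : DifferentiableOn ℂ g (ball a R))
    (hs : 0 < s) (hsR : s < R) :
    2*π*‖g a‖^2 ≤ ∫ θ in (0:ℝ)..(2*π), ‖g (circleMap a s θ)‖^2 := by
  have hπ : (0:ℝ) < π := Real.pi_pos
  have hcont : Continuous (fun θ => g (circleMap a s θ)) := by
    apply hg.continuousOn.comp_continuous (continuous_circleMap a s)
    intro θ
    have hd : dist (circleMap a s θ) a = |s| := by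
      rw [dist_eq_norm, circleMap_sub_center, norm_circleMap_zero]
    rw [mem_ball, hd, _root_.abs_of_pos hs]
    exact hsR
  have hint1 : IntervalIntegrable (fun θ => ‖g (circleMap a s θ)‖) volume 0 (2*π) :=
    (hcont.norm).intervalIntegrable _ _
  have hint2 : IntervalIntegrable (fun θ => ‖g (circleMap a s θ)‖^2) volume 0 (2*π) :=
    (hcont.norm.pow 2).intervalIntegrable _ _
  set m : ℝ := ∫ θ in (0:ℝ)..(2*π), ‖g (circleMap a s θ)‖ with hm
  have hnorm : 2*π*‖g a‖ ≤ m := by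
    have h1 := circle_mean g hg hs hsR
    have h2 : ‖((2*π : ℝ) : ℂ) * g a‖ = 2*π*‖g a‖ := by
      rw [norm_mul, Complex.norm_real, Real.norm_eq_abs,
        _root_.abs_of_nonneg (by positivity : (0:ℝ) ≤ 2*π)]
    calc 2*π*‖g a‖ = ‖∫ θ in (0:ℝ)..(2*π), g (circleMap a s θ)‖ := by rw [h1, h2]
      _ ≤ ∫ θ in (0:ℝ)..(2*π), ‖g (circleMap a s θ)‖ :=
          intervalIntegral.norm_integral_le_integral_norm (by positivity)
  set c : ℝ := ‖g a‖ with hc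
  have hvar : 0 ≤ ∫ θ in (0:ℝ)..(2*π), (‖g (circleMap a s θ)‖ - c)^2 :=
    intervalIntegral.integral_nonneg (by positivity) (fun θ _ => sq_nonneg _)
  have hexp : (∫ θ in (0:ℝ)..(2*π), (‖g (circleMap a s θ)‖ - c)^2)
      = (∫ θ in (0:ℝ)..(2*π), ‖g (circleMap a s θ)‖^2) - 2*c*m + 2*π*c^2 := by
    have : ∀ θ : ℝ, (‖g (circleMap a s θ)‖ - c)^2
        = ‖g (circleMap a s θ)‖^2 - 2*c*‖g (circleMap a s θ)‖ + c^2 := fun θ => by ring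
    simp_rw [this]
    rw [intervalIntegral.integral_add (hint2.sub (hint1.const_mul (2*c)))
      (intervalIntegrable_const), intervalIntegral.integral_sub hint2 (hint1.const_mul (2*c)),
      intervalIntegral.integral_const_mul, intervalIntegral.integral_const]
    simp only [smul_eq_mul, sub_zero]
    rw [hm]
  rw [hexp] at hvar
  nlinarith [norm_nonneg (g a)]

lemma radial_gauss {b r : ℝ} (hb : 0 < b) (hr : 0 < r) :
    ∫ s in Ioo (0:ℝ) r, s * (2*π*Real.exp (-b*s^2)) = π * (1 - Real.exp (-b*r^2))/b := by
  rw [← MeasureTheory.integral_Ioc_eq_integral_Ioo, ← intervalIntegral.integral_of_le hr.le]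
  have hderiv : ∀ s ∈ Set.uIcc (0:ℝ) r,
      HasDerivAt (fun t => -(π/b) * Real.exp (-b*t^2)) (s * (2*π*Real.exp (-b*s^2))) s := by
    intro s _
    have h1 : HasDerivAt (fun t : ℝ => -b*t^2) (-b*(2*s)) s := by
      have := (hasDerivAt_pow 2 s).const_mul (-b)
      simpa using this
    have h2 := (h1.exp).const_mul (-(π/b))
    refine h2.congr_deriv ?_
    rw [div_eq_mul_inv]
    linear_combination (2*π*s*Real.exp (-b*s^2)) * mul_inv_cancel₀ hb.ne'
  rw [intervalIntegral.integral_eq_sub_of_hasDerivAt hderiv ?_]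
  · have h0 : -b * (0:ℝ)^2 = 0 := by ring
    rw [h0, Real.exp_zero]
    field_simp
    ring
  · apply Continuous.intervalIntegrable
    continuity


lemma exp_quad_bound {y : ℝ} (hy : |y| ≤ 1) :
    |Real.exp y - (1 + y + y^2/2)| ≤ |y|^3 := by
  have h := Real.exp_bound hy (n := 3) (by norm_num)
  have hsum : (∑ m ∈ Finset.range 3, y ^ m / m.factorial) = 1 + y + y^2/2 := by
    simp [Finset.sum_range_succ]
  rw [hsum] at h
  have : |y|^3 * ((3:ℕ).succ / ((3:ℕ).factorial * 3)) ≤ |y|^3 := by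
    have h3 : ((3:ℕ).succ / ((3:ℕ).factorial * 3) : ℝ) = 4/18 := by norm_num [Nat.factorial]
    rw [h3]
    nlinarith [pow_nonneg (abs_nonneg y) 3]
  exact h.trans this

lemma cont_gauss (b : ℝ) (a : ℂ) : Continuous (fun z : ℂ => Real.exp (-b*‖z-a‖^2)) :=
  Real.continuous_exp.comp (continuous_const.mul ((continuous_id.sub continuous_const).norm.pow 2))

lemma cont_radial (b c : ℝ) : Continuous (fun s : ℝ => (s * (2*π*Real.exp (-b*s^2))) * c) := by
  have h1 : Continuous fun s : ℝ => Real.exp (-b*s^2) :=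
    Real.continuous_exp.comp (continuous_const.mul (continuous_id.pow 2))
  exact (continuous_id.mul (continuous_const.mul h1)).mul continuous_const

lemma gauss_ball {b r : ℝ} (hb : 0 < b) (hr : 0 < r) (a : ℂ) :
    ∫ z in ball a r, Real.exp (-b*‖z-a‖^2) = π * (1 - Real.exp (-b*r^2))/b := by
  have hu : ContinuousOn (fun z : ℂ => Real.exp (-b*‖z-a‖^2)) (closedBall a r) :=
    (cont_gauss b a).continuousOn
  rw [(polar_ball hr hu).2]
  have hptw : ∀ s ∈ Ioo (0:ℝ) r,
      s * (∫ θ in Ioo (-π) π, Real.exp (-b*‖(a + Complex.polarCoord.symm (s, θ)) - a‖^2))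
        = s * (2*π*Real.exp (-b*s^2)) := by
    intro s hs
    congr 1
    have h1 : ∀ θ : ℝ, Real.exp (-b*‖(a + Complex.polarCoord.symm (s, θ)) - a‖^2)
        = Real.exp (-b*s^2) := by
      intro θ
      congr 2
      rw [add_sub_cancel_left, Complex.norm_polarCoord_symm,
        _root_.abs_of_pos hs.1]
    calc (∫ θ in Ioo (-π) π, Real.exp (-b*‖(a + Complex.polarCoord.symm (s, θ)) - a‖^2))
        = ∫ _θ in Ioo (-π) π, Real.exp (-b*s^2) := by simp_rw [h1]
      _ = (volume (Ioo (-π) π)).toReal * Real.exp (-b*s^2) := by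
          rw [setIntegral_const]; rfl
      _ = 2*π*Real.exp (-b*s^2) := by
          rw [Real.volume_Ioo]
          rw [ENNReal.toReal_ofReal (by linarith [Real.pi_pos])]
          ring_nf
  rw [setIntegral_congr_fun measurableSet_Ioo hptw]
  exact radial_gauss hb hr

set_option maxHeartbeats 1000000 in
lemma submean_ball {g : ℂ → ℂ} {a : ℂ} {R b ρ : ℝ} (hg : DifferentiableOn ℂ g (ball a R))
    (hb : 0 < b) (hρ : 0 < ρ) (hρR : ρ < R) :
    π * (1 - Real.exp (-b*ρ^2))/b * ‖g a‖^2
      ≤ ∫ z in ball a ρ, Real.exp (-b*‖z-a‖^2) * ‖g z‖^2 := by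
  set u : ℂ → ℝ := fun z => Real.exp (-b*‖z-a‖^2) * ‖g z‖^2 with hu
  have hucont : ContinuousOn u (closedBall a ρ) := by
    apply ContinuousOn.mul
    · exact (cont_gauss b a).continuousOn
    · have : ContinuousOn g (closedBall a ρ) :=
        hg.continuousOn.mono (closedBall_subset_ball hρR)
      exact (this.norm).pow 2
  obtain ⟨hint, heq⟩ := polar_ball hρ hucont
  rw [heq]
  -- lower bound the outer integrand pointwise
  have hptw : ∀ s ∈ Ioo (0:ℝ) ρ,
      (s * (2*π*Real.exp (-b*s^2))) * ‖g a‖^2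
        ≤ s * ∫ θ in Ioo (-π) π, u (a + Complex.polarCoord.symm (s, θ)) := by
    intro s hs
    have hθint : (∫ θ in Ioo (-π) π, u (a + Complex.polarCoord.symm (s, θ)))
        = Real.exp (-b*s^2) * ∫ θ in (0:ℝ)..(2*π), ‖g (circleMap a s θ)‖^2 := by
      rw [theta_to_circle u a s]
      have h1 : ∀ θ : ℝ, u (circleMap a s θ)
          = Real.exp (-b*s^2) * ‖g (circleMap a s θ)‖^2 := by
        intro θ
        simp only [hu]
        congr 2
        rw [circleMap_sub_center, norm_circleMap_zero,
          _root_.abs_of_pos hs.1]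
      simp_rw [h1]
      rw [intervalIntegral.integral_const_mul]
    rw [hθint]
    have hsub := circle_submean g hg hs.1 (hs.2.trans hρR)
    have he : (0:ℝ) < Real.exp (-b*s^2) := Real.exp_pos _
    calc (s * (2*π*Real.exp (-b*s^2))) * ‖g a‖^2
        = s * (Real.exp (-b*s^2) * (2*π*‖g a‖^2)) := by ring
      _ ≤ s * (Real.exp (-b*s^2) * ∫ θ in (0:ℝ)..(2*π), ‖g (circleMap a s θ)‖^2) := by
          apply mul_le_mul_of_nonneg_left _ hs.1.le
          exact mul_le_mul_of_nonneg_left hsub he.le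
  have hint2 : IntegrableOn (fun s => (s * (2*π*Real.exp (-b*s^2))) * ‖g a‖^2)
      (Ioo (0:ℝ) ρ) volume := by
    exact ((cont_radial b (‖g a‖^2)).continuousOn.integrableOn_compact isCompact_Icc).mono_set
      Ioo_subset_Icc_self
  have hmono := setIntegral_mono_on hint2 hint measurableSet_Ioo hptw
  refine le_trans ?_ hmono
  rw [MeasureTheory.integral_mul_const, radial_gauss hb hρ]

def Sset (φ : ℂ → ℝ) (a : ℂ) (r : ℝ) : Set ℝ :=
  { t : ℝ | ∃ f : ℂ → ℂ, DifferentiableOn ℂ f (ball a r) ∧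
    IntegrableOn (fun z => ‖f z‖ ^ 2 * Real.exp (-φ z)) (ball a r) volume ∧
    f a = 1 ∧
    t = (∫ z in ball a r, ‖f z‖ ^ 2 * Real.exp (-φ z)) /
        (Real.pi * r ^ 2 * Real.exp (-φ a)) }

lemma Lindex_eq (φ : ℂ → ℝ) (a : ℂ) (r : ℝ) : Lindex φ a r = sInf (Sset φ a r) := rfl

lemma Sset_bddBelow (φ : ℂ → ℝ) (a : ℂ) (r : ℝ) : BddBelow (Sset φ a r) := by
  refine ⟨0, fun t ht => ?_⟩
  obtain ⟨f, hd, hi, hfa, rfl⟩ := ht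
  apply div_nonneg
  · apply setIntegral_nonneg measurableSet_ball
    intro z _
    positivity
  · positivity

lemma mem_Sset {φ : ℂ → ℝ} {a : ℂ} {r : ℝ} {f : ℂ → ℂ}
    (hd : DifferentiableOn ℂ f (ball a r))
    (hi : IntegrableOn (fun z => ‖f z‖ ^ 2 * Real.exp (-φ z)) (ball a r) volume)
    (hfa : f a = 1) :
    ((∫ z in ball a r, ‖f z‖ ^ 2 * Real.exp (-φ z)) /
        (Real.pi * r ^ 2 * Real.exp (-φ a))) ∈ Sset φ a r :=
  ⟨f, hd, hi, hfa, rfl⟩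

section Main
variable {Ω : Set ℂ} {φ : ℂ → ℝ} {a : ℂ}

lemma taylor_H (hΩo : IsOpen Ω) (hφ : ContDiffOn ℝ ∞ φ Ω) (ha : a ∈ Ω) :
    ∃ γ β : ℂ, ∀ ε : ℝ, 0 < ε → ∃ ρ : ℝ, 0 < ρ ∧ ball a ρ ⊆ Ω ∧ ∀ z ∈ ball a ρ,
      |φ z - φ a - (γ*(z-a) + β*(z-a)^2).re - dzdzbar φ a * ‖z-a‖^2| ≤ ε * ‖z-a‖^2 := by
  set D1 := fderiv ℝ φ a with hD1
  set B := fderiv ℝ (fderiv ℝ φ) a with hB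
  have hs : B 1 I = B I 1 := B_symm hΩo hφ ha 1 I
  have hdz : dzdzbar φ a = (B 1 1 + B I I)/4 := dzdzbar_eq_B (hasFDerivAt_dphi hΩo hφ ha)
  refine ⟨((D1 1 : ℝ):ℂ) - ((D1 I : ℝ):ℂ)*I,
    (((B 1 1 - B I I)/4 : ℝ):ℂ) - (((B 1 I)/2 : ℝ):ℂ)*I, ?_⟩
  intro ε hε
  obtain ⟨ρ, h1, h2, h3⟩ := taylor2 hΩo hφ ha hε
  refine ⟨ρ, h1, h2, fun z hz => ?_⟩
  have hkey := key_identity D1 B hs (z - a)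
  have h4 := h3 z hz
  rw [hdz]
  have heq : φ z - φ a - (((((D1 1 : ℝ)):ℂ) - (((D1 I : ℝ)):ℂ)*I) * (z-a)
        + (((((B 1 1 - B I I)/4 : ℝ)):ℂ) - ((((B 1 I)/2 : ℝ)):ℂ)*I) * (z-a)^2).re
        - (B 1 1 + B I I)/4 * ‖z-a‖^2
      = φ z - φ a - D1 (z - a) - (1/2) * B (z - a) (z - a) := by
    linarith [hkey]
  rw [heq]
  exact h4

lemma elem_upper {b r ga ε : ℝ} (hga : 0 < ga) (hε : 0 < ε) (hεga : ε < ga)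
    (hb : ga - ε/4 ≤ b) (hr : 0 < r) (hy1 : b*r^2 ≤ 1) (hy2 : b^2*r^2 ≤ 3*ε/8) :
    (1 - Real.exp (-(b*r^2)))/(b*r^2) ≤ Real.exp (-(((ga-ε)/2)*r^2)) := by
  have hbpos : 0 < b := by nlinarith
  have hypos : 0 < b*r^2 := by positivity
  have hyabs : |(-(b*r^2))| ≤ 1 := by rw [abs_neg, abs_of_pos hypos]; exact hy1
  have h3 := abs_le.1 (exp_quad_bound hyabs)
  have hup : 1 - Real.exp (-(b*r^2)) ≤ b*r^2 - (b*r^2)^2/2 + (b*r^2)^3 := by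
    have h := h3.1
    rw [abs_neg, abs_of_pos hypos] at h
    nlinarith [h]
  have hxpos : 0 < ((ga-ε)/2)*r^2 := by
    have hgae : 0 < ga - ε := by linarith
    positivity
  have hexp : 1 - ((ga-ε)/2)*r^2 ≤ Real.exp (-(((ga-ε)/2)*r^2)) := by
    have := Real.add_one_le_exp (-(((ga-ε)/2)*r^2)); linarith
  have h5 : ((ga-ε)/2)*r^2 ≤ (b*r^2)/2 - (b*r^2)^2 := by
    have hh1 : (0:ℝ) ≤ (b - (ga - ε/4)) * r^2 := mul_nonneg (by linarith) (sq_nonneg r)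
    have hh2 : (0:ℝ) ≤ (3*ε/8 - b^2*r^2) * r^2 := mul_nonneg (by linarith) (sq_nonneg r)
    nlinarith [hh1, hh2]
  have hkey : b*r^2 - (b*r^2)^2/2 + (b*r^2)^3 ≤ (b*r^2) * (1 - ((ga-ε)/2)*r^2) := by
    have h6 : (0:ℝ) ≤ (b*r^2) * ((b*r^2)/2 - (b*r^2)^2 - ((ga-ε)/2)*r^2) :=
      mul_nonneg hypos.le (by linarith)
    have hid : (b*r^2) * (1 - ((ga-ε)/2)*r^2) - (b*r^2 - (b*r^2)^2/2 + (b*r^2)^3)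
        = (b*r^2) * ((b*r^2)/2 - (b*r^2)^2 - ((ga-ε)/2)*r^2) := by ring
    linarith [h6, hid]
  rw [div_le_iff₀ hypos]
  calc 1 - Real.exp (-(b*r^2)) ≤ b*r^2 - (b*r^2)^2/2 + (b*r^2)^3 := hup
    _ ≤ (b*r^2) * (1 - ((ga-ε)/2)*r^2) := hkey
    _ ≤ (b*r^2) * Real.exp (-(((ga-ε)/2)*r^2)) :=
        mul_le_mul_of_nonneg_left hexp hypos.le
    _ = Real.exp (-(((ga-ε)/2)*r^2)) * (b*r^2) := by ring

lemma elem_lower {b d r : ℝ} (hb : 0 < b) (hd : 0 < d) (hr : 0 < r) (hr1 : r ≤ 1)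
    (hy1 : b*r^2 ≤ 1) (hx1 : d*r^2 ≤ 1)
    (h : 1 - Real.exp (-(b*r^2)) ≤ (b*r^2) * Real.exp (-(d*r^2))) :
    d ≤ b/2 + (b^2 + d^2/2 + d^3)*r^2 := by
  have hypos : 0 < b*r^2 := by positivity
  have hxpos : 0 < d*r^2 := by positivity
  have hyabs : |(-(b*r^2))| ≤ 1 := by rw [abs_neg, abs_of_pos hypos]; exact hy1
  have hxabs : |(-(d*r^2))| ≤ 1 := by rw [abs_neg, abs_of_pos hxpos]; exact hx1
  have h3y := (abs_le.1 (exp_quad_bound hyabs)).2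
  have h3x := (abs_le.1 (exp_quad_bound hxabs)).2
  rw [abs_neg, abs_of_pos hypos] at h3y
  rw [abs_neg, abs_of_pos hxpos] at h3x
  have hsqy : (1 + -(b*r^2) + (-(b*r^2))^2/2) = 1 - b*r^2 + (b*r^2)^2/2 := by ring
  have hsqx : (1 + -(d*r^2) + (-(d*r^2))^2/2) = 1 - d*r^2 + (d*r^2)^2/2 := by ring
  rw [hsqy] at h3y
  rw [hsqx] at h3x
  have hey : b*r^2 - (b*r^2)^2/2 - (b*r^2)^3 ≤ 1 - Real.exp (-(b*r^2)) := by linarith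
  have hex : Real.exp (-(d*r^2)) ≤ 1 - d*r^2 + (d*r^2)^2/2 + (d*r^2)^3 := by linarith
  have hmul : (b*r^2) * Real.exp (-(d*r^2))
      ≤ (b*r^2) * (1 - d*r^2 + (d*r^2)^2/2 + (d*r^2)^3) :=
    mul_le_mul_of_nonneg_left hex hypos.le
  have hchain : b*r^2 - (b*r^2)^2/2 - (b*r^2)^3
      ≤ (b*r^2) * (1 - d*r^2 + (d*r^2)^2/2 + (d*r^2)^3) := by linarith
  have hid : (b*r^2)*((b*r^2)/2 + (b*r^2)^2 + (d*r^2)^2/2 + (d*r^2)^3) - (b*r^2)*(d*r^2)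
      = (b*r^2)*(1 - d*r^2 + (d*r^2)^2/2 + (d*r^2)^3)
        - (b*r^2 - (b*r^2)^2/2 - (b*r^2)^3) := by ring
  have K : (b*r^2) * (d*r^2)
      ≤ (b*r^2) * ((b*r^2)/2 + (b*r^2)^2 + (d*r^2)^2/2 + (d*r^2)^3) := by linarith
  have K2 : d*r^2 ≤ (b*r^2)/2 + (b*r^2)^2 + (d*r^2)^2/2 + (d*r^2)^3 :=
    (mul_le_mul_iff_right₀ hypos).1 K
  have hr6 : r^6 ≤ r^4 := pow_le_pow_of_le_one hr.le hr1 (by norm_num)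
  have hid2 : (b/2 + (b^2 + d^2/2 + d^3)*r^2) * r^2
      - ((b*r^2)/2 + (b*r^2)^2 + (d*r^2)^2/2 + (d*r^2)^3) = d^3*(r^4 - r^6) := by ring
  have h7 : 0 ≤ d^3*(r^4 - r^6) := mul_nonneg (pow_nonneg hd.le 3) (by linarith)
  have K3 : d * r^2 ≤ (b/2 + (b^2 + d^2/2 + d^3)*r^2) * r^2 := by linarith
  exact le_of_mul_le_mul_right K3 (pow_pos hr 2)

end Main
section Dir
variable {Ω : Set ℂ} {φ : ℂ → ℝ} {a : ℂ}

set_option maxHeartbeats 1000000 in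
lemma upper_dir (hΩo : IsOpen Ω) (hφ : ContDiffOn ℝ ∞ φ Ω) (ha : a ∈ Ω)
    {ga : ℝ} (hga : 0 < ga) (hc : ga ≤ dzdzbar φ a) {ε : ℝ} (hε : 0 < ε) (hεga : ε < ga) :
    ∃ rε : ℝ, 0 < rε ∧ ball a (2*rε) ⊆ Ω ∧ ∀ r : ℝ, 0 < r → r < rε →
      Lindex φ a r ≤ Real.exp (-((ga - ε) / 2) * r ^ 2) := by
  obtain ⟨γ, β, htay⟩ := taylor_H hΩo hφ ha
  have hε4 : 0 < ε/4 := by linarith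
  obtain ⟨ρ, hρpos, hρΩ, hT⟩ := htay (ε/4) hε4
  obtain ⟨b, hbdef⟩ : ∃ b : ℝ, b = dzdzbar φ a - ε/4 := ⟨_, rfl⟩
  have hb : ga - ε/4 ≤ b := by rw [hbdef]; linarith
  have hbpos : 0 < b := by linarith
  obtain ⟨s3, hs3def⟩ : ∃ s3 : ℝ, s3 = Real.sqrt (3*ε/8) := ⟨_, rfl⟩
  have hs3pos : 0 < s3 := hs3def ▸ Real.sqrt_pos.2 (by linarith)
  have hs3sq : s3^2 = 3*ε/8 := by rw [hs3def]; exact Real.sq_sqrt (by positivity)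
  obtain ⟨s1, hs1def⟩ : ∃ s1 : ℝ, s1 = Real.sqrt (1/b) := ⟨_, rfl⟩
  have hs1pos : 0 < s1 := hs1def ▸ Real.sqrt_pos.2 (by positivity)
  have hs1sq : s1^2 = 1/b := by rw [hs1def]; exact Real.sq_sqrt (by positivity)
  set r1 := s3 / b with hr1def
  set r2 := s1 with hr2def
  have hr1pos : 0 < r1 := div_pos hs3pos hbpos
  have hr2pos : 0 < r2 := hs1pos
  set rε := min (ρ/2) (min r1 r2) with hrεdef
  have hrεpos : 0 < rε := lt_min (by linarith) (lt_min hr1pos hr2pos)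
  refine ⟨rε, hrεpos, ?_, ?_⟩
  · refine subset_trans (ball_subset_ball ?_) hρΩ
    calc 2*rε ≤ 2*(ρ/2) := by
          have := min_le_left (ρ/2) (min r1 r2); linarith
      _ = ρ := by ring
  · intro r hr hrrε
    have hrρ2 : r < ρ/2 := lt_of_lt_of_le hrrε (min_le_left _ _)
    have hrρ : r < ρ := by linarith
    have hrr1 : r ≤ r1 := le_of_lt (lt_of_lt_of_le hrrε ((min_le_right _ _).trans (min_le_left _ _)))
    have hrr2 : r ≤ r2 := le_of_lt (lt_of_lt_of_le hrrε ((min_le_right _ _).trans (min_le_right _ _)))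
    -- smallness facts
    have hy1 : b*r^2 ≤ 1 := by
      have h1 : r^2 ≤ r2^2 := pow_le_pow_left₀ hr.le hrr2 2
      rw [hr2def, hs1sq] at h1
      calc b*r^2 ≤ b*(1/b) := mul_le_mul_of_nonneg_left h1 hbpos.le
        _ = 1 := mul_one_div_cancel hbpos.ne'
    have hy2 : b^2*r^2 ≤ 3*ε/8 := by
      have h1 : b*r ≤ s3 := by
        have h1' : b*r ≤ b*r1 := mul_le_mul_of_nonneg_left hrr1 hbpos.le
        calc b*r ≤ b*(s3/b) := by rw [hr1def] at h1'; exact h1'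
          _ = s3 := by field_simp
      have h2 : (b*r)^2 ≤ s3^2 := pow_le_pow_left₀ (by positivity) h1 2
      rw [hs3sq] at h2
      nlinarith [h2]
    -- competitor function
    set H : ℂ → ℂ := fun z => γ*(z-a) + β*(z-a)^2 with hHdef
    set f : ℂ → ℂ := fun z => Complex.exp (((1/2:ℝ):ℂ) * H z) with hfdef
    have hfa : f a = 1 := by simp [hfdef, hHdef]
    have hHdiff : Differentiable ℂ H := by
      rw [hHdef]
      apply Differentiable.add
      · exact (differentiable_id.sub_const a).const_mul γ
      · exact ((differentiable_id.sub_const a).pow 2).const_mul β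
    have hfd : Differentiable ℂ f := (hHdiff.const_mul _).cexp
    have hnormf : ∀ z, ‖f z‖^2 = Real.exp ((H z).re) := by
      intro z
      rw [hfdef]
      simp only [Complex.norm_exp]
      rw [sq, ← Real.exp_add, ← Complex.add_re, ← two_mul]
      congr 2
      push_cast
      ring
    -- pointwise bound on the ball
    have hpoint : ∀ z ∈ ball a r, ‖f z‖^2 * Real.exp (-φ z)
        ≤ Real.exp (-φ a) * Real.exp (-b*‖z-a‖^2) := by
      intro z hz
      have hzρ : z ∈ ball a ρ := ball_subset_ball hrρ.le hz
      have h1 := (abs_le.1 (hT z hzρ)).1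
      have h2 : (H z).re - φ z ≤ -φ a - b*‖z-a‖^2 := by
        rw [hHdef]
        rw [hbdef]
        simp only at h1 ⊢
        nlinarith [sq_nonneg ‖z-a‖, h1]
      rw [hnormf, ← Real.exp_add, ← Real.exp_add]
      exact Real.exp_le_exp.2 (by linarith)
    have hcontφ : ContinuousOn φ (closedBall a r) :=
      hφ.continuousOn.mono (subset_trans (closedBall_subset_ball hrρ) hρΩ)
    have hint : IntegrableOn (fun z => ‖f z‖^2 * Real.exp (-φ z)) (ball a r) volume := by
      apply IntegrableOn.mono_set _ ball_subset_closedBall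
      apply ContinuousOn.integrableOn_compact (isCompact_closedBall a r)
      apply ContinuousOn.mul
      · exact (hfd.continuous.norm.pow 2).continuousOn
      · exact Real.continuous_exp.comp_continuousOn hcontφ.neg
    have hintR : IntegrableOn (fun z => Real.exp (-φ a) * Real.exp (-b*‖z-a‖^2))
        (ball a r) volume := by
      apply IntegrableOn.mono_set _ ball_subset_closedBall
      exact (continuous_const.mul (cont_gauss b a)).continuousOn.integrableOn_compact
        (isCompact_closedBall a r)
    have hmem := mem_Sset (φ := φ) hfd.differentiableOn hint hfa
    have hLle : Lindex φ a r
        ≤ (∫ z in ball a r, ‖f z‖^2 * Real.exp (-φ z)) / (π*r^2*Real.exp (-φ a)) := by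
      rw [Lindex_eq]
      exact csInf_le (Sset_bddBelow _ _ _) hmem
    have hIle : (∫ z in ball a r, ‖f z‖^2 * Real.exp (-φ z))
        ≤ Real.exp (-φ a) * (π * (1 - Real.exp (-b*r^2))/b) := by
      calc (∫ z in ball a r, ‖f z‖^2 * Real.exp (-φ z))
          ≤ ∫ z in ball a r, Real.exp (-φ a) * Real.exp (-b*‖z-a‖^2) :=
            setIntegral_mono_on hint hintR measurableSet_ball hpoint
        _ = Real.exp (-φ a) * ∫ z in ball a r, Real.exp (-b*‖z-a‖^2) := by
            rw [MeasureTheory.integral_const_mul]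
        _ = Real.exp (-φ a) * (π * (1 - Real.exp (-b*r^2))/b) := by
            rw [gauss_ball hbpos hr a]
    have hden : (0:ℝ) < π*r^2*Real.exp (-φ a) := by positivity
    have hstep : (∫ z in ball a r, ‖f z‖^2 * Real.exp (-φ z)) / (π*r^2*Real.exp (-φ a))
        ≤ (1 - Real.exp (-(b*r^2)))/(b*r^2) := by
      have h1 : (Real.exp (-φ a) * (π * (1 - Real.exp (-b*r^2))/b)) / (π*r^2*Real.exp (-φ a))
          = (1 - Real.exp (-(b*r^2)))/(b*r^2) := by
        rw [show -(b*r^2) = -b*r^2 by ring]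
        field_simp
      rw [← h1]
      exact div_le_div_of_nonneg_right hIle hden.le
    have hfinal := elem_upper hga hε hεga hb hr hy1 hy2
    have hflip : -(((ga-ε)/2)*r^2) = -((ga - ε) / 2) * r ^ 2 := by ring
    rw [hflip] at hfinal
    exact hLle.trans (hstep.trans hfinal)

end Dir
set_option maxHeartbeats 2000000 in
lemma lower_dir {Ω : Set ℂ} {φ : ℂ → ℝ} {a : ℂ}
    (hΩo : IsOpen Ω) (hφ : ContDiffOn ℝ ∞ φ Ω) (ha : a ∈ Ω)
    {ga : ℝ} (hga : 0 < ga)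
    (hyp : ∀ ε : ℝ, 0 < ε → ε < ga → ∃ rε : ℝ, 0 < rε ∧
        ∀ r : ℝ, 0 < r → r < rε →
          Lindex φ a r ≤ Real.exp (-((ga - ε) / 2) * r ^ 2)) :
    ga ≤ dzdzbar φ a := by
  by_contra hlt
  push_neg at hlt
  obtain ⟨γ, β, htay⟩ := taylor_H hΩo hφ ha
  obtain ⟨ε, hεdef⟩ : ∃ ε : ℝ, ε = min (ga/4) ((ga - dzdzbar φ a)/3) := ⟨_, rfl⟩
  have hεpos : 0 < ε := by rw [hεdef]; exact lt_min (by linarith) (by linarith)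
  have hε1 : ε ≤ ga/4 := hεdef ▸ min_le_left _ _
  have hε2 : ε ≤ (ga - dzdzbar φ a)/3 := hεdef ▸ min_le_right _ _
  have hεga : ε < ga := by linarith
  obtain ⟨ρ, hρpos, hρΩ, hT⟩ := htay ε hεpos
  obtain ⟨rε, hrεpos, hLB⟩ := hyp ε hεpos hεga
  obtain ⟨b, hbdef⟩ : ∃ b : ℝ, b = max (dzdzbar φ a + ε) ε := ⟨_, rfl⟩
  have hbpos : 0 < b := by rw [hbdef]; exact lt_of_lt_of_le hεpos (le_max_right _ _)
  have hbce : dzdzbar φ a + ε ≤ b := hbdef ▸ le_max_left _ _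
  obtain ⟨d, hddef⟩ : ∃ d : ℝ, d = (ga - ε)/2 := ⟨_, rfl⟩
  have hdpos : 0 < d := by rw [hddef]; linarith
  have core : ∀ r : ℝ, 0 < r → r < rε → r < ρ →
      (1 - Real.exp (-(b*r^2)))/(b*r^2) ≤ Real.exp (-(d*r^2)) := by
    intro r hr hrrε hrρ
    have hsubΩ : closedBall a r ⊆ Ω := (closedBall_subset_ball hrρ).trans hρΩ
    have hcontφ : ContinuousOn φ (closedBall a r) := hφ.continuousOn.mono hsubΩ
    have hint1 : IntegrableOn (fun z => ‖(1:ℂ)‖^2 * Real.exp (-φ z)) (ball a r) volume := by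
      apply IntegrableOn.mono_set _ ball_subset_closedBall
      apply ContinuousOn.integrableOn_compact (isCompact_closedBall a r)
      exact ContinuousOn.mul continuousOn_const
        (Real.continuous_exp.comp_continuousOn hcontφ.neg)
    have hne : (Sset φ a r).Nonempty :=
      ⟨_, mem_Sset (differentiableOn_const 1) hint1 rfl⟩
    have hlow : (1 - Real.exp (-(b*r^2)))/(b*r^2) ≤ Lindex φ a r := by
      rw [Lindex_eq]
      apply le_csInf hne
      rintro t ⟨f, hfd, hfi, hfa, rfl⟩
      set H : ℂ → ℂ := fun z => γ*(z-a) + β*(z-a)^2 with hHdef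
      have hHdiff : Differentiable ℂ H := by
        rw [hHdef]
        apply Differentiable.add
        · exact (differentiable_id.sub_const a).const_mul γ
        · exact ((differentiable_id.sub_const a).pow 2).const_mul β
      set g : ℂ → ℂ := fun z => f z * Complex.exp (-(((1/2:ℝ):ℂ) * H z)) with hgdef
      have hga1 : g a = 1 := by simp [hgdef, hHdef, hfa]
      have hgd : DifferentiableOn ℂ g (ball a r) :=
        hfd.mul ((hHdiff.const_mul _).neg.cexp.differentiableOn)
      have hnormg : ∀ z, ‖g z‖^2 = ‖f z‖^2 * Real.exp (-(H z).re) := by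
        intro z
        rw [hgdef]
        simp only [norm_mul, Complex.norm_exp]
        rw [mul_pow]
        congr 1
        rw [sq, ← Real.exp_add]
        congr 1
        rw [Complex.neg_re, Complex.re_ofReal_mul]
        ring
      set u : ℂ → ℝ := fun z => Real.exp (-b*‖z-a‖^2) * ‖g z‖^2 with hudef
      have hptw : ∀ z ∈ ball a r, u z * Real.exp (-(φ a)) ≤ ‖f z‖^2 * Real.exp (-φ z) := by
        intro z hz
        have hzρ : z ∈ ball a ρ := ball_subset_ball hrρ.le hz
        have h1 := (abs_le.1 (hT z hzρ)).2
        have h2 : φ z ≤ φ a + (H z).re + b*‖z-a‖^2 := by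
          rw [hHdef]
          simp only at h1 ⊢
          nlinarith [sq_nonneg ‖z-a‖, hbce, h1]
        rw [hudef]
        simp only
        rw [hnormg]
        rw [show Real.exp (-b*‖z-a‖^2) * (‖f z‖^2 * Real.exp (-(H z).re)) * Real.exp (-(φ a))
            = ‖f z‖^2 * (Real.exp (-b*‖z-a‖^2) * (Real.exp (-(H z).re) * Real.exp (-(φ a)))) by
          ring]
        rw [← Real.exp_add, ← Real.exp_add]
        apply mul_le_mul_of_nonneg_left _ (by positivity)
        exact Real.exp_le_exp.2 (by linarith)
      have hgcont : ContinuousOn g (ball a r) := hgd.continuousOn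
      have hucont : ContinuousOn u (ball a r) :=
        ContinuousOn.mul (cont_gauss b a).continuousOn ((hgcont.norm).pow 2)
      have humeas : AEStronglyMeasurable u (volume.restrict (ball a r)) :=
        hucont.aestronglyMeasurable measurableSet_ball
      have hunonneg : ∀ z, 0 ≤ u z := fun z => by rw [hudef]; positivity
      have huint : IntegrableOn u (ball a r) volume := by
        apply Integrable.mono' (hfi.const_mul (Real.exp (φ a))) humeas
        apply (ae_restrict_iff' measurableSet_ball).2
        apply Filter.Eventually.of_forall
        intro z hz
        rw [Real.norm_eq_abs, _root_.abs_of_nonneg (hunonneg z)]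
        calc u z = u z * Real.exp (-(φ a)) * Real.exp (φ a) := by
              rw [mul_assoc, ← Real.exp_add]; simp
          _ ≤ (‖f z‖^2 * Real.exp (-φ z)) * Real.exp (φ a) :=
              mul_le_mul_of_nonneg_right (hptw z hz) (Real.exp_pos _).le
          _ = Real.exp (φ a) * (‖f z‖^2 * Real.exp (-φ z)) := by ring
      have hmono1 : Real.exp (-(φ a)) * (∫ z in ball a r, u z)
          ≤ ∫ z in ball a r, ‖f z‖^2 * Real.exp (-φ z) := by
        rw [← MeasureTheory.integral_const_mul]
        apply setIntegral_mono_on (huint.const_mul _) hfi measurableSet_ball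
        intro z hz
        rw [show Real.exp (-(φ a)) * u z = u z * Real.exp (-(φ a)) by ring]
        exact hptw z hz
      have hlim : π*(1 - Real.exp (-b*r^2))/b ≤ ∫ z in ball a r, u z := by
        have hev : ∀ ρ' ∈ Ioo (0:ℝ) r,
            π*(1 - Real.exp (-b*ρ'^2))/b ≤ ∫ z in ball a r, u z := by
          intro ρ' hρ'
          have hsm := submean_ball hgd hbpos hρ'.1 hρ'.2
          have h' : π*(1 - Real.exp (-b*ρ'^2))/b * ‖g a‖^2
              = π*(1 - Real.exp (-b*ρ'^2))/b := by
            rw [hga1]; simp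
          rw [h'] at hsm
          refine hsm.trans ?_
          apply setIntegral_mono_set huint
          · exact (ae_restrict_iff' measurableSet_ball).2
              (Filter.Eventually.of_forall fun z _ => hunonneg z)
          · exact HasSubset.Subset.eventuallyLE (ball_subset_ball hρ'.2.le)
        have hcont2 : Continuous (fun ρ' : ℝ => π*(1 - Real.exp (-b*ρ'^2))/b) :=
          ((continuous_const.mul (continuous_const.sub
            (Real.continuous_exp.comp (continuous_const.mul (continuous_id.pow 2))))).div_const b)
        have htend : Filter.Tendsto (fun ρ' : ℝ => π*(1 - Real.exp (-b*ρ'^2))/b)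
            (nhdsWithin r (Iio r)) (nhds (π*(1 - Real.exp (-b*r^2))/b)) :=
          (hcont2.tendsto r).mono_left nhdsWithin_le_nhds
        apply le_of_tendsto htend
        filter_upwards [Ioo_mem_nhdsLT_of_mem (⟨hr, le_refl r⟩ : r ∈ Ioc (0:ℝ) r)] with ρ' hρ'
          using hev ρ' hρ'
      have hden : (0:ℝ) < π*r^2*Real.exp (-φ a) := by positivity
      have hnum : Real.exp (-(φ a)) * (π*(1 - Real.exp (-b*r^2))/b)
          ≤ ∫ z in ball a r, ‖f z‖^2 * Real.exp (-φ z) :=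
        le_trans (mul_le_mul_of_nonneg_left hlim (Real.exp_pos _).le) hmono1
      have h1 : (Real.exp (-(φ a)) * (π*(1 - Real.exp (-b*r^2))/b)) / (π*r^2*Real.exp (-φ a))
          = (1 - Real.exp (-(b*r^2)))/(b*r^2) := by
        rw [show -(b*r^2) = -b*r^2 by ring]
        field_simp
      rw [← h1]
      exact div_le_div_of_nonneg_right hnum hden.le
    have hup := hLB r hr hrrε
    have hflip : -((ga - ε)/2) * r^2 = -(d*r^2) := by rw [hddef]; ring
    rw [hflip] at hup
    exact hlow.trans hup
  have hfinal : d ≤ b/2 := by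
    apply le_of_forall_pos_le_add
    intro ν hν
    obtain ⟨M, hMdef⟩ : ∃ M : ℝ, M = b^2 + d^2/2 + d^3 := ⟨_, rfl⟩
    have hMpos : 0 < M := by rw [hMdef]; positivity
    obtain ⟨sν, hsνdef⟩ : ∃ s : ℝ, s = Real.sqrt (ν/(M+1)) := ⟨_, rfl⟩
    have hsνpos : 0 < sν := hsνdef ▸ Real.sqrt_pos.2 (by positivity)
    have hsνsq : sν^2 = ν/(M+1) := by rw [hsνdef]; exact Real.sq_sqrt (by positivity)
    obtain ⟨sb, hsbdef⟩ : ∃ s : ℝ, s = Real.sqrt (1/b) := ⟨_, rfl⟩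
    have hsbpos : 0 < sb := hsbdef ▸ Real.sqrt_pos.2 (by positivity)
    have hsbsq : sb^2 = 1/b := by rw [hsbdef]; exact Real.sq_sqrt (by positivity)
    obtain ⟨sd, hsddef⟩ : ∃ s : ℝ, s = Real.sqrt (1/d) := ⟨_, rfl⟩
    have hsdpos : 0 < sd := hsddef ▸ Real.sqrt_pos.2 (by positivity)
    have hsdsq : sd^2 = 1/d := by rw [hsddef]; exact Real.sq_sqrt (by positivity)
    obtain ⟨r, hrdef⟩ : ∃ r : ℝ,
        r = min ((min rε ρ)/2) (min 1 (min sν (min sb sd))) := ⟨_, rfl⟩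
    have hrpos : 0 < r := by
      rw [hrdef]
      apply lt_min
      · have := lt_min hrεpos hρpos; positivity
      · exact lt_min one_pos (lt_min hsνpos (lt_min hsbpos hsdpos))
    have hrhalf : r ≤ (min rε ρ)/2 := hrdef ▸ min_le_left _ _
    have hrrε : r < rε := by
      have h2 : (min rε ρ)/2 < min rε ρ := by
        have := lt_min hrεpos hρpos; linarith
      exact lt_of_le_of_lt hrhalf (lt_of_lt_of_le h2 (min_le_left _ _))
    have hrρ : r < ρ := by
      have h2 : (min rε ρ)/2 < min rε ρ := by
        have := lt_min hrεpos hρpos; linarith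
      exact lt_of_le_of_lt hrhalf (lt_of_lt_of_le h2 (min_le_right _ _))
    have hr1 : r ≤ 1 := hrdef ▸ (min_le_right _ _).trans (min_le_left _ _)
    have hrsν : r ≤ sν := hrdef ▸ (min_le_right _ _).trans ((min_le_right _ _).trans (min_le_left _ _))
    have hrsb : r ≤ sb := hrdef ▸ (min_le_right _ _).trans
      ((min_le_right _ _).trans ((min_le_right _ _).trans (min_le_left _ _)))
    have hrsd : r ≤ sd := hrdef ▸ (min_le_right _ _).trans
      ((min_le_right _ _).trans ((min_le_right _ _).trans (min_le_right _ _)))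
    have hy1 : b*r^2 ≤ 1 := by
      have h1 : r^2 ≤ sb^2 := pow_le_pow_left₀ hrpos.le hrsb 2
      rw [hsbsq] at h1
      calc b*r^2 ≤ b*(1/b) := mul_le_mul_of_nonneg_left h1 hbpos.le
        _ = 1 := mul_one_div_cancel hbpos.ne'
    have hx1 : d*r^2 ≤ 1 := by
      have h1 : r^2 ≤ sd^2 := pow_le_pow_left₀ hrpos.le hrsd 2
      rw [hsdsq] at h1
      calc d*r^2 ≤ d*(1/d) := mul_le_mul_of_nonneg_left h1 hdpos.le
        _ = 1 := mul_one_div_cancel hdpos.ne'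
    have hcore := core r hrpos hrrε hrρ
    rw [div_le_iff₀ (by positivity : (0:ℝ) < b*r^2)] at hcore
    rw [mul_comm (Real.exp (-(d*r^2)))] at hcore
    have hel := elem_lower hbpos hdpos hrpos hr1 hy1 hx1 hcore
    have hr2ν : r^2 ≤ ν/(M+1) := by
      rw [← hsνsq]; exact pow_le_pow_left₀ hrpos.le hrsν 2
    have hMν : (b^2 + d^2/2 + d^3)*r^2 ≤ ν := by
      rw [← hMdef]
      calc M*r^2 ≤ M*(ν/(M+1)) := mul_le_mul_of_nonneg_left hr2ν hMpos.le
        _ ≤ ν := by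
          rw [mul_div_assoc']
          rw [div_le_iff₀ (by positivity : (0:ℝ) < M+1)]
          nlinarith [hν.le, hMpos.le]
    linarith
  have h1 : ga - ε ≤ b := by rw [hddef] at hfinal; linarith
  rw [hbdef] at h1
  rcases le_or_gt (dzdzbar φ a + ε) ε with hcase|hcase
  · rw [max_eq_right hcase] at h1
    linarith
  · rw [max_eq_left hcase.le] at h1
    linarith

/-- For a fixed `a ∈ Ω` and a positive number `g(a) > 0`, the sharper
estimate `L_φ(a,r) ≤ exp(−((g(a)−ε)/2)·r²)` for small `r` (for all `ε ∈ (0, g(a))`) is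
equivalent to `√−1 ∂∂̄φ(a) ≥ g(a)·ω`. -/
theorem stmt13 (Ω : Set ℂ) (hΩo : IsOpen Ω) (hΩc : IsConnected Ω)
    (hΩb : Bornology.IsBounded Ω)
    (φ : ℂ → ℝ) (hφ : ContDiffOn ℝ ∞ φ Ω)
    (a : ℂ) (ha : a ∈ Ω) (ga : ℝ) (hga : 0 < ga) :
    (∀ ε : ℝ, 0 < ε → ε < ga → ∃ rε : ℝ, 0 < rε ∧ (rε : EReal) < delta Ω a ∧
        ∀ r : ℝ, 0 < r → r < rε →
          Lindex φ a r ≤ Real.exp (-((ga - ε) / 2) * r ^ 2)) ↔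
    ga ≤ dzdzbar φ a := by
  constructor
  · intro hyp
    apply lower_dir hΩo hφ ha hga
    intro ε hε hεga
    obtain ⟨rε, h1, _h2, h3⟩ := hyp ε hε hεga
    exact ⟨rε, h1, h3⟩
  · intro hc ε hε hεga
    obtain ⟨rε, h1, h2, h3⟩ := upper_dir hΩo hφ ha hga hc hε hεga
    refine ⟨rε, h1, ?_, h3⟩
    have hmem : ((2*rε : ℝ) : EReal)
        ∈ {x : EReal | ∃ r : ℝ, x = (r : EReal) ∧ 0 < r ∧ ball a r ⊆ Ω} :=
      ⟨2*rε, rfl, by linarith, h2⟩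
    have hle : ((2*rε : ℝ) : EReal) ≤ delta Ω a := le_sSup hmem
    have hlt : ((rε : ℝ) : EReal) < ((2*rε : ℝ) : EReal) := by
      exact_mod_cast (by linarith : rε < 2*rε)
    exact lt_of_lt_of_le hlt hle
end
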